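/- arXiv:2411.16376 — 7 statements merged into one kernel-verified Lean document; each statement's English description precedes it below -/
import Mathlib

section
/- For all α, λ, x in (0,∞), the inversion formula (1/Γ(1+α)) e^{-λx} x^α = (1/(2π)) ∫_{-∞}^{+∞} e^{iθx} (λ + iθ)^{-(1+α)} dθ holds, where the complex power takes the principal value. -/
open MeasureTheory Complex Real
open Set Filter FourierTransform Topology

/-!
For `0 < Re a` and `λ > 0` the function `f(t) = t^(a-1) e^(-λt)` on `t > 0` (extended by `0`)
has Fourier transform `Γ(a) (λ + 2πiξ)^(-a)`. This is the Laplace transform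
`∫₀^∞ t^(a-1) e^(-st) dt = Γ(a) s^(-a)` at `s = λ + 2πiξ`: for real `s > 0` it is the Gamma
integral after rescaling, and both sides are holomorphic on `Re s > 0`, so the identity theorem
extends it to the half-plane. When `Re a > 1` the transform decays like `|ξ|^(-Re a)`, so it is
integrable, and Fourier inversion at the continuity point `x > 0` gives the formula.
-/

lemma AnalyticOnNhd.eqOn_re_pos_of_eq_ofReal {f g : ℂ → ℂ}
    (hf : AnalyticOnNhd ℂ f {z | 0 < z.re}) (hg : AnalyticOnNhd ℂ g {z | 0 < z.re})
    (hfg : ∀ r : ℝ, 0 < r → f r = g r) : EqOn f g {z | 0 < z.re} := by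
  have hreal : Tendsto ((↑) : ℝ → ℂ) (𝓝[≠] 1) (𝓝[≠] 1) :=
    continuous_ofReal.continuousWithinAt.tendsto_nhdsWithin fun _ _ ↦ by simp_all
  have hpos : ∀ᶠ r : ℝ in 𝓝[≠] 1, f r = g r := by
    filter_upwards [nhdsWithin_le_nhds (Ioi_mem_nhds one_pos)] with r hr using hfg r hr
  refine hf.eqOn_of_preconnected_of_frequently_eq hg (convex_halfSpace_re_gt 0).isPreconnected
    (by simp : (0 : ℝ) < (1 : ℂ).re) ?_
  exact hreal.frequently hpos.frequently

lemma norm_ofReal_cpow_mul_exp_neg_mul {t : ℝ} (ht : 0 < t) (b s : ℂ) :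
    ‖(t : ℂ) ^ b * cexp (-(s * t))‖ = t ^ b.re * rexp (-(s.re * t)) := by
  rw [norm_mul, norm_cpow_eq_rpow_re_of_pos ht, norm_exp]
  simp

lemma continuousOn_ofReal_cpow_mul_exp_neg_mul (b s : ℂ) :
    ContinuousOn (fun t : ℝ => (t : ℂ) ^ b * cexp (-(s * t))) (Ioi 0) := fun t ht =>
  ((continuousAt_ofReal_cpow_const t b (Or.inr (ne_of_gt ht))).mul
    (by fun_prop)).continuousWithinAt

lemma integrableOn_cpow_mul_exp_neg_mul_Ioi {b s : ℂ} (hb : -1 < b.re) (hs : 0 < s.re) :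
    IntegrableOn (fun t : ℝ => (t : ℂ) ^ b * cexp (-(s * t))) (Ioi 0) := by
  have h := integrableOn_rpow_mul_exp_neg_mul_rpow hb zero_lt_one hs
  simp only [Real.rpow_one] at h
  refine h.mono' ((continuousOn_ofReal_cpow_mul_exp_neg_mul b s).aestronglyMeasurable
    measurableSet_Ioi) ?_
  filter_upwards [ae_restrict_mem measurableSet_Ioi] with t ht
  rw [norm_ofReal_cpow_mul_exp_neg_mul ht, neg_mul]

lemma hasDerivAt_integral_cpow_mul_exp_neg_mul_Ioi {b s : ℂ} (hb : -1 < b.re) (hs : 0 < s.re) :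
    HasDerivAt (fun s : ℂ => ∫ t in Ioi (0 : ℝ), (t : ℂ) ^ b * cexp (-(s * t)))
      (-∫ t in Ioi (0 : ℝ), (t : ℂ) ^ (b + 1) * cexp (-(s * t))) s := by
  have hball : ∀ z ∈ Metric.ball s (s.re / 2), s.re / 2 < z.re := by
    intro z hz
    have := (abs_re_le_norm (z - s)).trans_lt (mem_ball_iff_norm.1 hz)
    rw [sub_re] at this
    linarith [neg_abs_le (z.re - s.re)]
  have key := hasDerivAt_integral_of_dominated_loc_of_deriv_le
    (F := fun (z : ℂ) (t : ℝ) => (t : ℂ) ^ b * cexp (-(z * t)))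
    (F' := fun (z : ℂ) (t : ℝ) => -((t : ℂ) ^ (b + 1) * cexp (-(z * t))))
    (bound := fun t : ℝ => t ^ (b.re + 1) * rexp (-(s.re / 2 * t)))
    (Metric.ball_mem_nhds s (half_pos hs)) ?_ (integrableOn_cpow_mul_exp_neg_mul_Ioi hb hs)
    ((integrableOn_cpow_mul_exp_neg_mul_Ioi (b := b + 1) (by rw [add_re, one_re]; linarith) hs).neg
      |>.aestronglyMeasurable) ?_ ?_ ?_
  · simpa only [integral_neg] using key.2
  · filter_upwards [(isOpen_lt continuous_const continuous_re).mem_nhds hs] with z hz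
    exact (integrableOn_cpow_mul_exp_neg_mul_Ioi hb hz).aestronglyMeasurable
  · filter_upwards [ae_restrict_mem measurableSet_Ioi] with t ht z hz
    rw [norm_neg, norm_ofReal_cpow_mul_exp_neg_mul ht, add_re, one_re]
    have hz := hball z hz
    have ht : 0 < t := ht
    gcongr ?_ * rexp ?_
    nlinarith
  · have h := integrableOn_rpow_mul_exp_neg_mul_rpow (s := b.re + 1) (by linarith) zero_lt_one
      (half_pos hs)
    simp only [Real.rpow_one, neg_mul] at h
    exact h
  · filter_upwards [ae_restrict_mem measurableSet_Ioi] with t ht z _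
    have ht0 : (t : ℂ) ≠ 0 := ofReal_ne_zero.2 (ne_of_gt ht)
    refine (((hasDerivAt_mul_const (t : ℂ)).neg.cexp).const_mul ((t : ℂ) ^ b)).congr_deriv ?_
    rw [cpow_add _ _ ht0, cpow_one, Pi.neg_apply]
    ring

lemma integral_cpow_mul_exp_neg_mul_Ioi_of_re_pos {a s : ℂ} (ha : 0 < a.re) (hs : 0 < s.re) :
    ∫ t in Ioi (0 : ℝ), (t : ℂ) ^ (a - 1) * cexp (-(s * t)) = Gamma a * s ^ (-a) := by
  have ha' : -1 < (a - 1).re := by simp [ha]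
  have hU : IsOpen {z : ℂ | 0 < z.re} := isOpen_lt continuous_const continuous_re
  have hlaplace : AnalyticOnNhd ℂ
      (fun s : ℂ => ∫ t in Ioi (0 : ℝ), (t : ℂ) ^ (a - 1) * cexp (-(s * t))) {z | 0 < z.re} :=
    DifferentiableOn.analyticOnNhd (fun z hz =>
      (hasDerivAt_integral_cpow_mul_exp_neg_mul_Ioi ha' hz).differentiableAt.differentiableWithinAt)
      hU
  have hpow : AnalyticOnNhd ℂ (fun s : ℂ => Gamma a * s ^ (-a)) {z | 0 < z.re} :=
    DifferentiableOn.analyticOnNhd (fun z hz =>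
      ((differentiableAt_id.cpow_const (Or.inl hz)).const_mul _).differentiableWithinAt) hU
  refine AnalyticOnNhd.eqOn_re_pos_of_eq_ofReal hlaplace hpow (fun r hr => ?_) hs
  rw [integral_cpow_mul_exp_neg_mul_Ioi ha hr, mul_comm, cpow_neg, one_div,
    inv_cpow _ _ (by simp [arg_ofReal_of_nonneg hr.le, pi_ne_zero.symm])]

noncomputable def gammaKernel (a : ℂ) (lam : ℝ) : ℝ → ℂ :=
  (Ioi 0).indicator fun t => (t : ℂ) ^ (a - 1) * cexp (-(lam * t))

lemma gammaKernel_of_pos (a : ℂ) (lam : ℝ) {t : ℝ} (ht : 0 < t) :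
    gammaKernel a lam t = (t : ℂ) ^ (a - 1) * cexp (-(lam * t)) :=
  indicator_of_mem ht _

lemma integrable_gammaKernel {a : ℂ} (ha : 0 < a.re) {lam : ℝ} (hlam : 0 < lam) :
    Integrable (gammaKernel a lam) :=
  (integrable_indicator_iff measurableSet_Ioi).2
    (integrableOn_cpow_mul_exp_neg_mul_Ioi (by simp [ha]) (by simpa using hlam))

lemma continuousAt_gammaKernel (a : ℂ) (lam : ℝ) {x : ℝ} (hx : 0 < x) :
    ContinuousAt (gammaKernel a lam) x :=
  ((continuousOn_ofReal_cpow_mul_exp_neg_mul (a - 1) lam).continuousAt (Ioi_mem_nhds hx)).congr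
    (eventually_of_mem (Ioi_mem_nhds hx) fun _ ht => (gammaKernel_of_pos a lam ht).symm)

lemma fourier_gammaKernel {a : ℂ} (ha : 0 < a.re) {lam : ℝ} (hlam : 0 < lam) (ξ : ℝ) :
    𝓕 (gammaKernel a lam) ξ = Gamma a * ((lam : ℂ) + (2 * π * ξ : ℝ) * I) ^ (-a) := by
  rw [← integral_cpow_mul_exp_neg_mul_Ioi_of_re_pos ha (by simpa using hlam),
    fourier_real_eq_integral_exp_smul, ← integral_indicator measurableSet_Ioi]
  congr 1 with t
  by_cases ht : t ∈ Ioi 0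
  · rw [gammaKernel, indicator_of_mem ht, indicator_of_mem ht, smul_eq_mul, mul_left_comm,
      ← Complex.exp_add]
    push_cast
    ring_nf
  · rw [gammaKernel, indicator_of_notMem ht, indicator_of_notMem ht, smul_zero]

lemma norm_cpow_le_mul_exp_abs_im (z w : ℂ) :
    ‖z ^ w‖ ≤ ‖z‖ ^ w.re * rexp (π * |w.im|) := by
  calc ‖z ^ w‖ ≤ ‖z‖ ^ w.re / rexp (arg z * w.im) := norm_cpow_le z w
    _ = ‖z‖ ^ w.re * rexp (-(arg z * w.im)) := by rw [Real.exp_neg, div_eq_mul_inv]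
    _ ≤ ‖z‖ ^ w.re * rexp (π * |w.im|) := by
      gcongr
      calc -(arg z * w.im) ≤ |arg z| * |w.im| := by rw [← abs_mul]; exact neg_le_abs _
        _ ≤ π * |w.im| := by gcongr; exact abs_arg_le_pi z

lemma one_add_abs_le_mul_norm_ofReal_add_mul_I {lam : ℝ} (hlam : 0 < lam) (θ : ℝ) :
    1 + |θ| ≤ (1 + lam⁻¹) * ‖(lam : ℂ) + θ * I‖ := by
  have hre : lam ≤ ‖(lam : ℂ) + θ * I‖ := by
    simpa [abs_of_pos hlam] using abs_re_le_norm ((lam : ℂ) + θ * I)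
  have him : |θ| ≤ ‖(lam : ℂ) + θ * I‖ := by simpa using abs_im_le_norm ((lam : ℂ) + θ * I)
  have hone : 1 ≤ lam⁻¹ * ‖(lam : ℂ) + θ * I‖ := by
    rw [inv_mul_eq_div, one_le_div hlam]; exact hre
  linarith

lemma integrable_cpow_neg_ofReal_add_mul_I {a : ℂ} (ha : 1 < a.re) {lam : ℝ}
    (hlam : 0 < lam) :
    Integrable fun θ : ℝ => ((lam : ℂ) + θ * I) ^ (-a) := by
  set C := 1 + lam⁻¹
  have hC : 0 < C := by positivity
  refine ((integrable_one_add_norm (E := ℝ) (r := a.re) (by simpa using ha)).const_mul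
    (C ^ a.re * rexp (π * |a.im|))).mono' ?_ (ae_of_all _ fun θ => ?_)
  · exact (Continuous.cpow (by fun_prop) continuous_const
      fun θ => Or.inl (by simpa using hlam)).aestronglyMeasurable
  · have hθ := one_add_abs_le_mul_norm_ofReal_add_mul_I hlam θ
    have hpos : 0 < (1 + |θ|) / C := by positivity
    calc ‖((lam : ℂ) + θ * I) ^ (-a)‖
        ≤ ‖(lam : ℂ) + θ * I‖ ^ (-a.re) * rexp (π * |a.im|) := by
          simpa using norm_cpow_le_mul_exp_abs_im ((lam : ℂ) + θ * I) (-a)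
      _ ≤ ((1 + |θ|) / C) ^ (-a.re) * rexp (π * |a.im|) := by
          refine mul_le_mul_of_nonneg_right ?_ (Real.exp_pos _).le
          exact Real.rpow_le_rpow_of_nonpos hpos (by rwa [div_le_iff₀' hC]) (by linarith)
      _ = C ^ a.re * rexp (π * |a.im|) * (1 + ‖θ‖) ^ (-a.re) := by
          rw [Real.div_rpow (by positivity) hC.le, Real.rpow_neg hC.le, Real.norm_eq_abs]
          field_simp

lemma gammaKernel_div_Gamma_eq_integral {a : ℂ} (ha : 1 < a.re) {lam : ℝ} (hlam : 0 < lam)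
    {x : ℝ} (hx : 0 < x) : gammaKernel a lam x / Gamma a =
      1 / (2 * π) * ∫ θ : ℝ, cexp (θ * x * I) * ((lam : ℂ) + θ * I) ^ (-a) := by
  have ha₀ : 0 < a.re := one_pos.trans ha
  have hF : 𝓕 (gammaKernel a lam) =
      fun ξ : ℝ => Gamma a * ((lam : ℂ) + (2 * π * ξ : ℝ) * I) ^ (-a) :=
    funext (fourier_gammaKernel ha₀ hlam)
  have hF_int : Integrable (𝓕 (gammaKernel a lam)) := by
    rw [hF]
    exact ((integrable_cpow_neg_ofReal_add_mul_I ha hlam).comp_mul_left'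
      (by positivity : 2 * π ≠ 0)).const_mul _
  rw [div_eq_iff (Gamma_ne_zero_of_re_pos ha₀),
    ← (integrable_gammaKernel ha₀ hlam).fourierInv_fourier_eq hF_int
    (continuousAt_gammaKernel a lam hx), fourierInv_eq', hF]
  let g : ℝ → ℂ := fun θ => cexp (θ * x * I) * ((lam : ℂ) + θ * I) ^ (-a)
  calc ∫ ξ : ℝ, cexp (↑(2 * π * inner ℝ ξ x) * I) •
        (Gamma a * ((lam : ℂ) + (2 * π * ξ : ℝ) * I) ^ (-a))
      = Gamma a * ∫ ξ : ℝ, g (2 * π * ξ) := by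
        rw [← integral_const_mul]
        congr 1 with ξ
        simp only [g, smul_eq_mul, RCLike.inner_apply, conj_trivial]
        push_cast
        ring_nf
    _ = 1 / (2 * π) * (∫ θ : ℝ, g θ) * Gamma a := by
        rw [Measure.integral_comp_mul_left g, abs_of_pos (by positivity), real_smul]
        push_cast
        ring

/-- Fourier inversion formula for the gamma density:
`(1/Γ(1+α)) e^{-λx} x^α = (1/(2π)) ∫_ℝ e^{iθx} (λ+iθ)^{-(1+α)} dθ` (principal powers). -/
theorem gamma_fourier_inversion (α lam x : ℝ) (hα : 0 < α) (hlam : 0 < lam) (hx : 0 < x) :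
    ((1 / Real.Gamma (1 + α) * Real.exp (-lam * x) * x ^ α : ℝ) : ℂ)
      = (1 / (2 * Real.pi)) *
        ∫ θ : ℝ, Complex.exp ((θ : ℂ) * x * Complex.I) *
          ((lam : ℂ) + θ * Complex.I) ^ (-(1 + α) : ℂ) := by
  have ha : 1 < ((1 + α : ℝ) : ℂ).re := by simpa using hα
  have key := gammaKernel_div_Gamma_eq_integral ha hlam hx
  rw [gammaKernel_of_pos _ _ hx, Gamma_ofReal, ofReal_add, ofReal_one, add_sub_cancel_left] at key
  rw [← key, ofReal_mul, ofReal_mul, ofReal_cpow hx.le, ofReal_exp]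
  push_cast [neg_mul]
  ring
end

section
/- Let 0 < α < β ≤ 1 and C₁, C₂ ∈ (0,∞), and let Φ(z) = C₁ z^α + C₂ z^β. For every fixed N ∈ ℕ and r > 0 there is a constant C > 0 such that for all z ∈ ℂ with Re z > 0 and |Im z| > r, the N-th derivative satisfies |(d/dz)^N (1/Φ(z))| ≤ C |z|^{-N-β}. Consequently, sup_{λ>0} ∫_{ℝ\(-r,r)} |((d/dz)^N (1/Φ))(λ + iθ)| dθ < ∞. -/
open Complex MeasureTheory
open scoped ENNReal NNReal

open Metric Set

/-!
Every point `w` of the disc of radius `‖z‖ / 3` about a point `z` of the right half-plane has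
`‖w‖ ≥ 2‖z‖/3` and lies in the sector `-‖w‖ < 2 Re w`, i.e. `|arg w| < 2π/3`. Since
`0 ≤ β - α ≤ 1`, the power `w ^ (β - α)` stays in that sector, so in the factorisation
`Φ w = w ^ α (C₁ + C₂ w ^ (β - α))` the second factor has norm at least `C₂ ‖w‖ ^ (β - α) / 2`,
whence `‖Φ w‖ ≥ C₂ ‖w‖ ^ β / 2` on the disc. Cauchy's estimate on the disc then bounds the
`N`-th derivative of `1 / Φ` at `z` by a multiple of `‖z‖ ^ (-N - β)`. For `N ≥ 1` this exponent
is below `-1`, and `‖λ + iθ‖ ≥ |θ|` gives a bound integrable on `|θ| ≥ r` independently of `λ`.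
-/

lemma Complex.norm_div_two_le_norm_ofReal_add {c : ℝ} (hc : 0 ≤ c) {v : ℂ}
    (hv : -‖v‖ ≤ 2 * v.re) : ‖v‖ / 2 ≤ ‖(c : ℂ) + v‖ := by
  have hsq : ‖(c : ℂ) + v‖ ^ 2 = (c + v.re) ^ 2 + v.im ^ 2 := by
    rw [Complex.sq_norm, Complex.normSq_apply]
    simp only [add_re, ofReal_re, add_im, ofReal_im, zero_add]
    ring
  have hv2 : ‖v‖ ^ 2 = v.re ^ 2 + v.im ^ 2 := by
    rw [Complex.sq_norm, Complex.normSq_apply]; ring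
  refine le_of_pow_le_pow_left₀ two_ne_zero (norm_nonneg _) ?_
  rw [hsq]
  nlinarith [norm_nonneg v, sq_nonneg (c - ‖v‖ / 2)]

lemma Real.cos_le_cos_mul_of_abs_le_pi {x γ : ℝ} (hx : |x| ≤ Real.pi) (hγ₀ : 0 ≤ γ)
    (hγ₁ : γ ≤ 1) : Real.cos x ≤ Real.cos (γ * x) := by
  rw [← Real.cos_abs x, ← Real.cos_abs (γ * x)]
  refine Real.cos_le_cos_of_nonneg_of_le_pi (abs_nonneg _) hx ?_
  rw [abs_mul, abs_of_nonneg hγ₀]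
  exact mul_le_of_le_one_left (abs_nonneg x) hγ₁

lemma Complex.neg_norm_le_two_mul_re_cpow {w : ℂ} (hw : -‖w‖ ≤ 2 * w.re) {γ : ℝ}
    (hγ₀ : 0 ≤ γ) (hγ₁ : γ ≤ 1) : -‖w ^ (γ : ℂ)‖ ≤ 2 * (w ^ (γ : ℂ)).re := by
  have hcos : -1 ≤ 2 * Real.cos (w.arg * γ) := by
    rcases eq_or_ne w 0 with rfl | hw0
    · norm_num
    have harg : -1 ≤ 2 * Real.cos w.arg := by
      have hpos : 0 < ‖w‖ := norm_pos_iff.mpr hw0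
      have := norm_mul_cos_arg w
      nlinarith
    rw [mul_comm w.arg γ]
    linarith [Real.cos_le_cos_mul_of_abs_le_pi (abs_arg_le_pi w) hγ₀ hγ₁]
  rw [cpow_ofReal_re, norm_cpow_real]
  nlinarith [Real.rpow_nonneg (norm_nonneg w) γ]

lemma Complex.mem_slitPlane_of_neg_norm_lt_two_mul_re {w : ℂ} (hw : -‖w‖ < 2 * w.re) :
    w ∈ slitPlane := by
  rw [mem_slitPlane_iff]
  by_contra! h
  have : ‖w‖ = -w.re := by
    rw [← abs_re_eq_norm.mpr h.2, abs_of_nonpos h.1]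
  linarith

lemma Complex.two_div_three_mul_norm_le_norm {z w : ℂ} (hw : w ∈ closedBall z (‖z‖ / 3)) :
    2 / 3 * ‖z‖ ≤ ‖w‖ := by
  rw [mem_closedBall_iff_norm] at hw
  linarith [norm_sub_norm_le z w, norm_sub_rev z w]

lemma Complex.neg_norm_lt_two_mul_re {z w : ℂ} (hz : 0 < z.re)
    (hw : w ∈ closedBall z (‖z‖ / 3)) : -‖w‖ < 2 * w.re := by
  have hre : z.re - ‖z‖ / 3 ≤ w.re := by
    rw [mem_closedBall_iff_norm] at hw
    linarith [neg_abs_le (w - z).re, abs_re_le_norm (w - z), sub_re w z]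
  linarith [two_div_three_mul_norm_le_norm hw]

section

variable {α β C₁ C₂ : ℝ}

lemma div_two_mul_rpow_le_norm_add_cpow (hαβ : α ≤ β) (hβα : β ≤ α + 1) (hC₁ : 0 ≤ C₁)
    (hC₂ : 0 ≤ C₂) {w : ℂ} (hw : -‖w‖ < 2 * w.re) :
    C₂ / 2 * ‖w‖ ^ β ≤ ‖(C₁ : ℂ) * w ^ (α : ℂ) + (C₂ : ℂ) * w ^ (β : ℂ)‖ := by
  have hw0 : w ≠ 0 := by rintro rfl; simp at hw
  have hfactor : (C₁ : ℂ) * w ^ (α : ℂ) + (C₂ : ℂ) * w ^ (β : ℂ)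
      = w ^ (α : ℂ) * ((C₁ : ℂ) + (C₂ : ℂ) * w ^ ((β - α : ℝ) : ℂ)) := by
    rw [mul_add, mul_left_comm, ← cpow_add _ _ hw0]
    push_cast; ring_nf
  have hsector : -‖(C₂ : ℂ) * w ^ ((β - α : ℝ) : ℂ)‖
      ≤ 2 * ((C₂ : ℂ) * w ^ ((β - α : ℝ) : ℂ)).re := by
    have := neg_norm_le_two_mul_re_cpow hw.le (sub_nonneg.mpr hαβ) (by linarith)
    rw [norm_mul, Complex.norm_real, Real.norm_of_nonneg hC₂, re_ofReal_mul]
    nlinarith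
  calc C₂ / 2 * ‖w‖ ^ β = ‖w ^ (α : ℂ)‖ * (‖(C₂ : ℂ) * w ^ ((β - α : ℝ) : ℂ)‖ / 2) := by
        rw [norm_mul, Complex.norm_real, Real.norm_of_nonneg hC₂, norm_cpow_real, norm_cpow_real]
        rw [show β = α + (β - α) by ring, Real.rpow_add (norm_pos_iff.mpr hw0)]
        ring_nf
    _ ≤ _ := by
        rw [hfactor, norm_mul (w ^ (α : ℂ))]
        exact mul_le_mul_of_nonneg_left (norm_div_two_le_norm_ofReal_add hC₁ hsector)
          (norm_nonneg (w ^ (α : ℂ)))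


lemma exists_norm_iteratedDeriv_inv_add_cpow_le (hβ : 0 ≤ β) (hαβ : α ≤ β) (hβα : β ≤ α + 1)
    (hC₁ : 0 ≤ C₁) (hC₂ : 0 < C₂) (N : ℕ) :
    ∃ C : ℝ, 0 < C ∧ ∀ z : ℂ, 0 < z.re →
      ‖iteratedDeriv N
          (fun w : ℂ => 1 / ((C₁ : ℂ) * w ^ (α : ℂ) + (C₂ : ℂ) * w ^ (β : ℂ))) z‖
        ≤ C * ‖z‖ ^ (-(N : ℝ) - β) := by
  refine ⟨N.factorial * 3 ^ N * 2 / (C₂ * (2 / 3) ^ β), by positivity, fun z hz => ?_⟩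
  have hz0 : 0 < ‖z‖ := norm_pos_iff.mpr (by rintro rfl; simp at hz)
  have hlow : ∀ w ∈ closedBall z (‖z‖ / 3), C₂ / 2 * (2 / 3 * ‖z‖) ^ β
      ≤ ‖(C₁ : ℂ) * w ^ (α : ℂ) + (C₂ : ℂ) * w ^ (β : ℂ)‖ := fun w hw =>
    (div_two_mul_rpow_le_norm_add_cpow hαβ hβα hC₁ hC₂.le (neg_norm_lt_two_mul_re hz hw)).trans'
      (by gcongr; exact two_div_three_mul_norm_le_norm hw)
  have hlow_pos : 0 < C₂ / 2 * (2 / 3 * ‖z‖) ^ β := by positivity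
  have hdiff : DifferentiableOn ℂ
      (fun w : ℂ => 1 / ((C₁ : ℂ) * w ^ (α : ℂ) + (C₂ : ℂ) * w ^ (β : ℂ)))
      (closedBall z (‖z‖ / 3)) := by
    intro w hw
    have hslit := mem_slitPlane_of_neg_norm_lt_two_mul_re (neg_norm_lt_two_mul_re hz hw)
    have hne : (C₁ : ℂ) * w ^ (α : ℂ) + (C₂ : ℂ) * w ^ (β : ℂ) ≠ 0 :=
      norm_pos_iff.mp (hlow_pos.trans_le (hlow w hw))
    fun_prop (disch := assumption)
  have hsphere : ∀ w ∈ sphere z (‖z‖ / 3),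
      ‖1 / ((C₁ : ℂ) * w ^ (α : ℂ) + (C₂ : ℂ) * w ^ (β : ℂ))‖
        ≤ (C₂ / 2 * (2 / 3 * ‖z‖) ^ β)⁻¹ := fun w hw => by
    rw [one_div, norm_inv]
    exact inv_anti₀ hlow_pos (hlow w (sphere_subset_closedBall hw))
  refine (norm_iteratedDeriv_le_of_forall_mem_sphere_norm_le N (by positivity)
    (hdiff.diffContOnCl_ball subset_rfl) hsphere).trans_eq ?_
  rw [Real.mul_rpow (by norm_num) hz0.le, sub_eq_add_neg, ← neg_add, Real.rpow_neg hz0.le,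
    Real.rpow_add hz0, Real.rpow_natCast, div_pow]
  field_simp

end

lemma integrableOn_abs_rpow_of_lt {e r : ℝ} (he : e < -1) (hr : 0 < r) :
    IntegrableOn (fun θ : ℝ => |θ| ^ e) {θ | r ≤ |θ|} := by
  have hIci : IntegrableOn (fun θ : ℝ => |θ| ^ e) (Ici r) := by
    rw [integrableOn_Ici_iff_integrableOn_Ioi]
    refine (integrableOn_Ioi_rpow_of_lt he hr).congr_fun (fun θ hθ => ?_) measurableSet_Ioi
    rw [abs_of_pos (hr.trans hθ)]
  have hIic : IntegrableOn (fun θ : ℝ => |θ| ^ e) (Iic (-r)) := by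
    rw [← neg_neg r] at hIci
    simpa using hIci.comp_neg_Iic
  have hset : {θ : ℝ | r ≤ |θ|} = Iic (-r) ∪ Ici r := by
    ext θ; simp [le_abs']
  rw [hset]
  exact hIic.union hIci

lemma exists_lintegral_vertical_le_of_norm_le_rpow {E : Type*} [NormedAddCommGroup E]
    {F : ℂ → E} {C e r : ℝ} (hC : 0 ≤ C) (he : e < -1) (hr : 0 < r)
    (hF : ∀ z : ℂ, 0 < z.re → ‖F z‖ ≤ C * ‖z‖ ^ e) :
    ∃ M : ℝ≥0∞, M < ⊤ ∧ ∀ lam : ℝ, 0 < lam →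
      ∫⁻ θ in {θ : ℝ | r ≤ |θ|}, ENNReal.ofReal ‖F ((lam : ℂ) + θ * Complex.I)‖ ≤ M := by
  refine ⟨∫⁻ θ in {θ : ℝ | r ≤ |θ|}, ENNReal.ofReal (C * |θ| ^ e),
    IntegrableOn.setLIntegral_lt_top ((integrableOn_abs_rpow_of_lt he hr).const_mul C),
    fun lam hlam => ?_⟩
  refine setLIntegral_mono (by fun_prop) fun θ hθ => ENNReal.ofReal_le_ofReal ?_
  have hz : 0 < ((lam : ℂ) + θ * Complex.I).re := by simpa using hlam
  refine (hF _ hz).trans (mul_le_mul_of_nonneg_left ?_ hC)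
  refine Real.rpow_le_rpow_of_nonpos (hr.trans_le hθ) ?_ (by linarith)
  simpa using abs_im_le_norm ((lam : ℂ) + θ * Complex.I)

/-- Uniform bound for the `N`-th derivative of `1/Φ`, `Φ(z) = C₁z^α + C₂z^β`, away from
the real axis, and the resulting uniform-in-`λ` integrability on vertical lines. -/
theorem deriv_bound_sum_two_stable (α β C₁ C₂ : ℝ)
    (hα : 0 < α) (hαβ : α < β) (hβ : β ≤ 1) (hC₁ : 0 < C₁) (hC₂ : 0 < C₂)
    (N : ℕ) (hN : 1 ≤ N) (r : ℝ) (hr : 0 < r) :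
    (∃ C : ℝ, 0 < C ∧ ∀ z : ℂ, 0 < z.re → r < |z.im| →
      ‖iteratedDeriv N
          (fun w : ℂ => 1 / ((C₁ : ℂ) * w ^ (α : ℂ) + (C₂ : ℂ) * w ^ (β : ℂ))) z‖
        ≤ C * ‖z‖ ^ (-(N : ℝ) - β)) ∧
    (∃ M : ℝ≥0∞, M < ⊤ ∧ ∀ lam : ℝ, 0 < lam →
      (∫⁻ θ in {θ : ℝ | r ≤ |θ|},
        ENNReal.ofReal
          ‖iteratedDeriv N
              (fun w : ℂ => 1 / ((C₁ : ℂ) * w ^ (α : ℂ) + (C₂ : ℂ) * w ^ (β : ℂ)))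
            ((lam : ℂ) + θ * Complex.I)‖) ≤ M) := by
  obtain ⟨C, hC, hbound⟩ := exists_norm_iteratedDeriv_inv_add_cpow_le (by linarith) hαβ.le
    (by linarith) hC₁.le hC₂ N
  have he : -(N : ℝ) - β < -1 := by
    have : (1 : ℝ) ≤ N := by exact_mod_cast hN
    linarith
  exact ⟨⟨C, hC, fun z hz _ => hbound z hz⟩,
    exists_lintegral_vertical_le_of_norm_le_rpow hC.le he hr hbound⟩
end

section
/- Let 0 < α ≤ 1 and Φ(z) = log(1 + z^α) (principal branches). For each N ∈ ℕ there exist polynomials p_{1,N}, …, p_{N,N} in one variable, each of degree at most N, such that for every z in the open right half-plane, (d/dz)^N (1/Φ(z)) = Σ_{k=1}^N p_{k,N}(z^α) / ((log(1+z^α))^{k+1} (z + z^{α+1})^N). -/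
/-!
Write `u = z ^ a`, `L = log (1 + u)` and `D = z + z ^ (a + 1) = z (1 + u)`. Since `z u' = a u`,
we get `L' = a u / D`, `D u' = a u (1 + u)` and `D' = 1 + (a + 1) u`. Hence the derivative of
`P(u) / (L ^ (k + 1) D ^ n)` is
`Q(u) / (L ^ (k + 1) D ^ (n + 1)) - (k + 1) a u P(u) / (L ^ (k + 2) D ^ (n + 1))`
with `Q = a X (1 + X) P' - n (1 + (a + 1) X) P`, and the numerators gain at most one degree.
Induction on `N` then gives the recursion
`p_{k,N+1} = a X (1 + X) p_{k,N}' - N (1 + (a + 1) X) p_{k,N} - k a X p_{k-1,N}`.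
For `0 < α ≤ 1` and `0 < re z` we have `0 < re (z ^ α)`, so `z` and `1 + z ^ α` stay in the
slit plane, where all the branches involved are holomorphic.
-/

open Complex Polynomial

theorem cpow_ofReal_re_pos {α : ℝ} (hα : |α| ≤ 1) {z : ℂ} (hz : 0 < z.re) :
    0 < (z ^ (α : ℂ)).re := by
  have harg : |arg z * α| < Real.pi / 2 := calc
    |arg z * α| ≤ |arg z| := by rw [abs_mul]; exact mul_le_of_le_one_right (abs_nonneg _) hα
    _ < Real.pi / 2 := abs_arg_lt_pi_div_two_iff.2 (Or.inl hz)
  rw [cpow_ofReal_re]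
  have hz0 : z ≠ 0 := fun h => by simp [h] at hz
  exact mul_pos (by positivity) (Real.cos_pos_of_mem_Ioo (abs_lt.1 harg))

theorem one_add_cpow_ofReal_mem_slitPlane {α : ℝ} (hα : |α| ≤ 1) {z : ℂ} (hz : 0 < z.re) :
    1 + z ^ (α : ℂ) ∈ slitPlane := by
  have hre := cpow_ofReal_re_pos hα hz
  refine mem_slitPlane_iff.2 (Or.inl ?_)
  rw [add_re, one_re]
  linarith

theorem log_one_add_ne_zero {w : ℂ} (hw : w ≠ 0) (h : 1 + w ∈ slitPlane) :
    log (1 + w) ≠ 0 := by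
  intro hlog
  have hexp := exp_log (slitPlane_ne_zero h)
  rw [hlog, exp_zero] at hexp
  exact hw (by linear_combination -hexp)

theorem Finset.sum_Icc_one_add_one {M : Type*} [AddCommMonoid M] (f : ℕ → M) (N : ℕ) :
    ∑ k ∈ Finset.Icc 1 (N + 1), f k = f 1 + ∑ k ∈ Finset.Icc 1 N, f (k + 1) := by
  rw [← Finset.insert_Icc_add_one_left_eq_Icc (by omega), Finset.sum_insert (by simp),
    ← Finset.map_add_right_Icc, Finset.sum_map]
  rfl

section Derivatives

variable {a z : ℂ}

theorem add_cpow_add_one (hz : z ≠ 0) : z + z ^ (a + 1) = z * (1 + z ^ a) := by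
  rw [cpow_add _ _ hz, cpow_one]; ring

theorem hasDerivAt_cpow_const_div (hz : z ∈ slitPlane) :
    HasDerivAt (· ^ a) (a * z ^ a / z) z := by
  have := (hasStrictDerivAt_cpow_const (c := a) hz).hasDerivAt
  rwa [cpow_sub _ _ (slitPlane_ne_zero hz), cpow_one, ← mul_div_assoc] at this

theorem hasDerivAt_log_one_add_cpow (hz : z ∈ slitPlane) (h : 1 + z ^ a ∈ slitPlane) :
    HasDerivAt (fun w => log (1 + w ^ a)) (a * z ^ a / (z + z ^ (a + 1))) z := by
  convert ((hasDerivAt_cpow_const_div hz).const_add 1).clog h using 1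
  rw [add_cpow_add_one (slitPlane_ne_zero hz)]
  field_simp [slitPlane_ne_zero h]

theorem hasDerivAt_add_cpow_add_one (hz : z ∈ slitPlane) :
    HasDerivAt (fun w => w + w ^ (a + 1)) (1 + (a + 1) * z ^ a) z := by
  have := (hasDerivAt_id' z).add (hasStrictDerivAt_cpow_const (c := a + 1) hz).hasDerivAt
  rwa [add_sub_cancel_right] at this

end Derivatives

noncomputable def logTerm (a : ℂ) (P : ℂ[X]) (k n : ℕ) (z : ℂ) : ℂ :=
  P.eval (z ^ a) / (log (1 + z ^ a) ^ (k + 1) * (z + z ^ (a + 1)) ^ n)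

noncomputable def logSum (a : ℂ) (N : ℕ) (p : ℕ → ℂ[X]) (z : ℂ) : ℂ :=
  ∑ k ∈ Finset.Icc 1 N, logTerm a (p k) k N z

noncomputable def logTermDerivPoly (a : ℂ) (n : ℕ) (P : ℂ[X]) : ℂ[X] :=
  C a * X * (1 + X) * derivative P - C (n : ℂ) * (1 + C (a + 1) * X) * P

noncomputable def logSumDerivCoeff (a : ℂ) (N : ℕ) (p : ℕ → ℂ[X]) (k : ℕ) : ℂ[X] :=
  logTermDerivPoly a N (p k) - C (a * k) * X * p (k - 1)

section LogTerm

variable {a z : ℂ}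

@[simp]
theorem logTerm_zero (k n : ℕ) : logTerm a 0 k n = 0 := by
  ext z; simp [logTerm]

theorem logTerm_sub (P Q : ℂ[X]) (k n : ℕ) :
    logTerm a (P - Q) k n z = logTerm a P k n z - logTerm a Q k n z := by
  simp only [logTerm, eval_sub, sub_div]

theorem hasDerivAt_logTerm (P : ℂ[X]) (k n : ℕ) (hz : z ∈ slitPlane)
    (h : 1 + z ^ a ∈ slitPlane) :
    HasDerivAt (logTerm a P k n)
      (logTerm a (logTermDerivPoly a n P) k (n + 1) z
        - logTerm a (C (a * (k + 1 : ℕ)) * X * P) (k + 1) (n + 1) z) z := by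
  have hz0 := slitPlane_ne_zero hz
  have hL := log_one_add_ne_zero (cpow_ne_zero_iff.2 (Or.inl hz0)) h
  have hD : z + z ^ (a + 1) ≠ 0 := by
    rw [add_cpow_add_one hz0]; exact mul_ne_zero hz0 (slitPlane_ne_zero h)
  have hP := (P.hasDerivAt (z ^ a)).comp z (hasDerivAt_cpow_const_div (a := a) hz)
  have hden := ((hasDerivAt_log_one_add_cpow hz h).pow (k + 1)).mul
    ((hasDerivAt_add_cpow_add_one (a := a) hz).pow n)
  refine (hP.div hden (mul_ne_zero (pow_ne_zero _ hL) (pow_ne_zero _ hD))).congr_deriv ?_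
  -- `HasDerivAt.pow` produces `D ^ (n - 1)`, with truncated subtraction at `n = 0`
  have hpow : (n : ℂ) * (z + z ^ (a + 1)) ^ (n - 1)
      = n * (z + z ^ (a + 1)) ^ n / (z + z ^ (a + 1)) := by
    rcases n with _ | n
    · simp
    · rw [Nat.add_sub_cancel, pow_succ]; field_simp
  simp only [logTerm, logTermDerivPoly, eval_sub, eval_mul, eval_add, eval_C, eval_X, eval_one,
    Function.comp_apply, Pi.mul_apply, Pi.pow_apply, Nat.add_sub_cancel, mul_assoc (n : ℂ), hpow]
  have h1 := slitPlane_ne_zero h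
  rw [add_cpow_add_one hz0]
  field_simp
  push_cast
  ring

end LogTerm

section LogSum

variable {a z : ℂ} {N : ℕ} {p : ℕ → ℂ[X]}

theorem logSumDerivCoeff_eq_zero (hp : ∀ k ∉ Finset.Icc 1 N, p k = 0) {k : ℕ}
    (hk : k ∉ Finset.Icc 1 (N + 1)) : logSumDerivCoeff a N p k = 0 := by
  simp only [Finset.mem_Icc, not_and_or, not_le] at hk
  have hpk : p k = 0 := hp k (by simp only [Finset.mem_Icc]; omega)
  have hpk' : p (k - 1) = 0 := hp (k - 1) (by simp only [Finset.mem_Icc]; omega)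
  simp [logSumDerivCoeff, logTermDerivPoly, hpk, hpk']

theorem natDegree_logSumDerivCoeff_le (hp : ∀ k, (p k).natDegree ≤ N) (k : ℕ) :
    (logSumDerivCoeff a N p k).natDegree ≤ N + 1 := by
  have hk := hp k
  have hk' := hp (k - 1)
  unfold logSumDerivCoeff logTermDerivPoly
  rcases eq_or_ne (p k).natDegree 0 with h0 | h0
  · rw [derivative_of_natDegree_zero h0, mul_zero, zero_sub]
    compute_degree
    omega
  · compute_degree
    omega

theorem hasDerivAt_logSum (hp₀ : p 0 = 0) (hpN : p (N + 1) = 0) (hz : z ∈ slitPlane)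
    (h : 1 + z ^ a ∈ slitPlane) :
    HasDerivAt (logSum a N p) (logSum a (N + 1) (logSumDerivCoeff a N p) z) z := by
  have hsum := HasDerivAt.fun_sum (u := Finset.Icc 1 N)
    (fun k _ => hasDerivAt_logTerm (p k) k N hz h)
  refine hsum.congr_deriv ?_
  simp only [logSum, logSumDerivCoeff, logTerm_sub, Finset.sum_sub_distrib]
  congr 1
  · rw [Finset.sum_Icc_succ_top (by omega)]
    simp [hpN, logTermDerivPoly]
  · rw [Finset.sum_Icc_one_add_one]
    simp [hp₀]

end LogSum

section IteratedDeriv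

variable {a : ℂ}

theorem hasDerivAt_one_div_log_one_add_cpow {z : ℂ} (hz : z ∈ slitPlane)
    (h : 1 + z ^ a ∈ slitPlane) :
    HasDerivAt (fun w => 1 / log (1 + w ^ a)) (logSum a 1 (Pi.single 1 (-(C a * X))) z) z := by
  have hterm := hasDerivAt_logTerm (a := a) 1 0 0 hz h
  have hfun : logTerm a 1 0 0 = fun w => 1 / log (1 + w ^ a) := by
    ext w; simp [logTerm]
  rw [hfun] at hterm
  refine hterm.congr_deriv ?_
  simp [logSum, logTerm, logTermDerivPoly]
  ring

theorem exists_eqOn_iteratedDeriv_one_div_log_one_add_cpow {U : Set ℂ} (hU : IsOpen U)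
    (hslit : ∀ z ∈ U, z ∈ slitPlane ∧ 1 + z ^ a ∈ slitPlane) {N : ℕ} (hN : 1 ≤ N) :
    ∃ p : ℕ → ℂ[X], (∀ k ∉ Finset.Icc 1 N, p k = 0) ∧
      (∀ k, (p k).natDegree ≤ N) ∧
      Set.EqOn (iteratedDeriv N fun w => 1 / log (1 + w ^ a)) (logSum a N p) U := by
  induction N, hN using Nat.le_induction with
  | base =>
    refine ⟨Pi.single 1 (-(C a * X)), fun k hk => ?_, fun k => ?_, fun z hz => ?_⟩
    · exact Pi.single_eq_of_ne (by simpa using hk) _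
    · rcases eq_or_ne k 1 with rfl | hk
      · simp only [Pi.single_eq_same]; compute_degree
      · simp [Pi.single_eq_of_ne hk]
    · rw [iteratedDeriv_one]
      exact (hasDerivAt_one_div_log_one_add_cpow (hslit z hz).1 (hslit z hz).2).deriv
  | succ N hN ih =>
    obtain ⟨p, hsupp, hdeg, heq⟩ := ih
    refine ⟨logSumDerivCoeff a N p, fun k => logSumDerivCoeff_eq_zero hsupp,
      natDegree_logSumDerivCoeff_le hdeg, fun z hz => ?_⟩
    rw [iteratedDeriv_succ, (heq.eventuallyEq_of_mem (hU.mem_nhds hz)).deriv_eq]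
    exact (hasDerivAt_logSum (hsupp 0 (by simp)) (hsupp (N + 1) (by simp))
      (hslit z hz).1 (hslit z hz).2).deriv

end IteratedDeriv

/-- Structure of the `N`-th derivative of `1/log(1+z^α)` on the right half-plane:
there are polynomials `p_{k,N}` of degree at most `N` with
`(d/dz)^N (1/Φ(z)) = Σ_{k=1}^N p_{k,N}(z^α) / ((log(1+z^α))^{k+1} (z+z^{α+1})^N)`. -/
theorem iteratedDeriv_inv_log_geometric (α : ℝ) (hα0 : 0 < α) (hα1 : α ≤ 1)
    (N : ℕ) (hN : 1 ≤ N) :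
    ∃ p : ℕ → Polynomial ℂ,
      (∀ k ∈ Finset.Icc 1 N, (p k).degree ≤ N) ∧
      ∀ z : ℂ, 0 < z.re →
        iteratedDeriv N (fun w : ℂ => 1 / Complex.log (1 + w ^ (α : ℂ))) z
          = ∑ k ∈ Finset.Icc 1 N,
              (p k).eval (z ^ (α : ℂ)) /
                ((Complex.log (1 + z ^ (α : ℂ))) ^ (k + 1) *
                  (z + z ^ ((α : ℂ) + 1)) ^ N) := by
  have hα : |α| ≤ 1 := abs_le.2 ⟨by linarith, hα1⟩
  obtain ⟨p, -, hdeg, heq⟩ := exists_eqOn_iteratedDeriv_one_div_log_one_add_cpow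
    (isOpen_lt continuous_const continuous_re)
    (fun z hz => ⟨mem_slitPlane_iff.2 (Or.inl hz), one_add_cpow_ofReal_mem_slitPlane hα hz⟩) hN
  exact ⟨p, fun k _ => natDegree_le_iff_degree_le.1 (hdeg k), fun z hz => heq hz⟩
end

section
/- Let 0 < α < β ≤ 1 and C₁, C₂ > 0, and set Φ(z) = C₁ z^α + C₂ z^β. Let n ∈ ℕ ∪ {0} and choose N ∈ ℕ with N > 1 + α - (n+1)(β-α). Then (d/dz)^N ( 1/Φ(z) - (1/C₁) Σ_{k=0}^n (-C₂/C₁)^k z^{-α + k(β-α)} ) = O(|z|^{-N - α + (n+1)(β-α)}) as z → 0 within the open right half-plane {Re z > 0}. -/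
/-!
For `w ≠ 0` we have `Φ(w) = C₁ w^α (1 + c w^δ)` with `c = C₂ / C₁` and `δ = β - α`, so the
bracket is the remainder of a geometric series: it equals `C₁⁻¹ (-c)^(n+1) w^γ / (1 + c w^δ)`
with `γ = -α + (n+1) δ`, which is `O(|w|^γ)` on the slit plane near `0`. For `Re z > 0` the closed
disc of radius `|z|/2` about `z` lies in the slit plane, and `|w|` is comparable to `|z|` on it;
Cauchy's estimate on that disc turns `O(|z|^γ)` for the function into `O(|z|^(γ - N))` for its
`N`-th derivative.
-/

open Complex Filter Asymptotics Metric Topology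

theorem closedBall_subset_slitPlane {z : ℂ} (hz : 0 ≤ z.re) {r : ℝ} (hr : r < ‖z‖) :
    closedBall z r ⊆ slitPlane := by
  intro w hw
  rw [mem_slitPlane_iff_not_le_zero]
  intro hw0
  simp only [Complex.le_def, zero_re, zero_im] at hw0
  have hwz : ‖z‖ ≤ ‖w - z‖ := by
    rw [← sq_le_sq₀ (norm_nonneg _) (norm_nonneg _), Complex.sq_norm, Complex.sq_norm,
      Complex.normSq_apply, Complex.normSq_apply]
    simp only [sub_re, sub_im, hw0.2]
    nlinarith [hw0.1]
  rw [mem_closedBall, dist_eq_norm] at hw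
  linarith

theorem Real.rpow_le_two_rpow_abs_mul_rpow {x y : ℝ} (γ : ℝ) (hx : 0 < x) (hxy : x / 2 ≤ y)
    (hyx : y ≤ 2 * x) : y ^ γ ≤ 2 ^ |γ| * x ^ γ := by
  have hy : 0 < y := by linarith
  have hquot : (y / x) ^ γ ≤ 2 ^ |γ| := by
    rcases le_or_gt 0 γ with hγ | hγ
    · rw [abs_of_nonneg hγ]
      exact Real.rpow_le_rpow (by positivity) ((div_le_iff₀ hx).2 hyx) hγ
    · calc (y / x) ^ γ ≤ (1 / 2) ^ γ :=
            Real.rpow_le_rpow_of_nonpos (by norm_num) ((le_div_iff₀ hx).2 (by linarith)) hγ.le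
        _ = 2 ^ |γ| := by
            rw [abs_of_neg hγ, one_div, Real.inv_rpow zero_le_two, Real.rpow_neg zero_le_two]
  calc y ^ γ = (y / x) ^ γ * x ^ γ := by
        rw [← Real.mul_rpow (by positivity) hx.le, div_mul_cancel₀ _ hx.ne']
    _ ≤ 2 ^ |γ| * x ^ γ := by gcongr

theorem tendsto_cpow_ofReal_nhds_zero {δ : ℝ} (hδ : 0 < δ) :
    Tendsto (fun w : ℂ => w ^ (δ : ℂ)) (𝓝 0) (𝓝 0) := by
  have := (continuousAt_cpow_zero_of_re_pos (z := δ) (by simpa using hδ)).comp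
    (f := fun w : ℂ => (w, (δ : ℂ))) (by fun_prop)
  simpa [Function.comp_def, zero_cpow (ofReal_ne_zero.2 hδ.ne')] using this.tendsto

theorem tendsto_one_add_mul_cpow_nhds_zero (c : ℂ) {δ : ℝ} (hδ : 0 < δ) :
    Tendsto (fun w : ℂ => 1 + c * w ^ (δ : ℂ)) (𝓝 0) (𝓝 1) := by
  simpa using ((tendsto_cpow_ofReal_nhds_zero hδ).const_mul c).const_add 1

theorem iteratedDeriv_isBigO_rpow_of_isBigO_rpow {f : ℂ → ℂ} {γ : ℝ}
    (hd : ∀ᶠ w in 𝓝[slitPlane] 0, DifferentiableAt ℂ f w)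
    (hf : f =O[𝓝[slitPlane] 0] fun w => ‖w‖ ^ γ) (N : ℕ) :
    iteratedDeriv N f =O[𝓝[{z | 0 < z.re}] 0] fun z => ‖z‖ ^ (γ - N) := by
  obtain ⟨K, hK0, hK⟩ := hf.exists_nonneg
  obtain ⟨ε, hε, hfε⟩ := Metric.mem_nhdsWithin_iff.1 (hd.and hK.bound)
  have hsmall : ∀ᶠ z in 𝓝[{z | 0 < z.re}] 0, z ∈ ball (0 : ℂ) (ε / 2) :=
    mem_nhdsWithin_of_mem_nhds (ball_mem_nhds 0 (half_pos hε))
  refine .of_bound (N.factorial * (K * 2 ^ |γ|) * 2 ^ N) ?_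
  filter_upwards [hsmall, self_mem_nhdsWithin] with z hzε (hz : 0 < z.re)
  rw [mem_ball_zero_iff] at hzε
  have hz0 : 0 < ‖z‖ := norm_pos_iff.2 (by rintro rfl; simp at hz)
  have hball : ∀ w ∈ closedBall z (‖z‖ / 2), DifferentiableAt ℂ f w ∧ ‖f w‖ ≤ K * ‖w‖ ^ γ ∧
      ‖z‖ / 2 ≤ ‖w‖ ∧ ‖w‖ ≤ 2 * ‖z‖ := by
    intro w hw
    have hwz : ‖w - z‖ ≤ ‖z‖ / 2 := by rwa [mem_closedBall, dist_eq_norm] at hw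
    have hlow : ‖z‖ / 2 ≤ ‖w‖ := by linarith [norm_sub_norm_le z w, norm_sub_rev z w]
    have hup : ‖w‖ ≤ 2 * ‖z‖ := by linarith [norm_le_norm_add_norm_sub' w z]
    obtain ⟨hdw, hfw⟩ := hfε ⟨by rw [mem_ball_zero_iff]; linarith,
      closedBall_subset_slitPlane hz.le (half_lt_self hz0) hw⟩
    refine ⟨hdw, ?_, hlow, hup⟩
    rwa [Real.norm_of_nonneg (by positivity)] at hfw
  have hsphere : ∀ w ∈ sphere z (‖z‖ / 2), ‖f w‖ ≤ K * 2 ^ |γ| * ‖z‖ ^ γ := by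
    intro w hw
    obtain ⟨-, hfw, hlow, hup⟩ := hball w (sphere_subset_closedBall hw)
    calc ‖f w‖ ≤ K * ‖w‖ ^ γ := hfw
      _ ≤ K * (2 ^ |γ| * ‖z‖ ^ γ) := by
          gcongr; exact Real.rpow_le_two_rpow_abs_mul_rpow γ hz0 hlow hup
      _ = K * 2 ^ |γ| * ‖z‖ ^ γ := by ring
  have hdiff : DiffContOnCl ℂ f (ball z (‖z‖ / 2)) :=
    DifferentiableOn.diffContOnCl_ball (U := closedBall z (‖z‖ / 2))
      (fun w hw => (hball w hw).1.differentiableWithinAt) subset_rfl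
  calc ‖iteratedDeriv N f z‖
      ≤ N.factorial * (K * 2 ^ |γ| * ‖z‖ ^ γ) / (‖z‖ / 2) ^ N :=
        norm_iteratedDeriv_le_of_forall_mem_sphere_norm_le N (half_pos hz0) hdiff hsphere
    _ = N.factorial * (K * 2 ^ |γ|) * 2 ^ N * ‖‖z‖ ^ (γ - N)‖ := by
        rw [Real.norm_of_nonneg (by positivity), Real.rpow_sub hz0, Real.rpow_natCast, div_pow]
        field_simp

theorem mul_cpow_add_mul_cpow_eq (a b : ℂ) (α β : ℝ) {w : ℂ} (ha : a ≠ 0) (hw : w ≠ 0) :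
    a * w ^ (α : ℂ) + b * w ^ (β : ℂ) =
      a * w ^ (α : ℂ) * (1 + b / a * w ^ ((β - α : ℝ) : ℂ)) := by
  rw [mul_add, mul_one, show (β : ℂ) = α + ((β - α : ℝ) : ℂ) by push_cast; ring, cpow_add _ _ hw]
  field_simp

noncomputable def invAddCpowRemainder (a b : ℂ) (α β : ℝ) (n : ℕ) (w : ℂ) : ℂ :=
  1 / (a * w ^ (α : ℂ) + b * w ^ (β : ℂ)) -
    1 / a * ∑ k ∈ Finset.range (n + 1), (-b / a) ^ k * w ^ ((-α + k * (β - α) : ℝ) : ℂ)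

theorem invAddCpowRemainder_eq (a b : ℂ) (α β : ℝ) (n : ℕ) {w : ℂ} (ha : a ≠ 0)
    (hw : w ≠ 0) (hD : 1 + b / a * w ^ ((β - α : ℝ) : ℂ) ≠ 0) :
    invAddCpowRemainder a b α β n w =
      1 / a * (-b / a) ^ (n + 1) * w ^ ((-α + (n + 1) * (β - α) : ℝ) : ℂ) /
        (1 + b / a * w ^ ((β - α : ℝ) : ℂ)) := by
  rw [invAddCpowRemainder, mul_cpow_add_mul_cpow_eq a b α β ha hw]
  set u := w ^ ((β - α : ℝ) : ℂ)
  set x := w ^ (α : ℂ)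
  have hpow (k : ℕ) : w ^ ((-α + k * (β - α) : ℝ) : ℂ) = x⁻¹ * u ^ k := by
    rw [← cpow_nat_mul, ← cpow_neg, ← cpow_add _ _ hw]; push_cast; ring_nf
  have hq : -b / a * u ≠ 1 := fun h => hD (by linear_combination -h)
  have hsum : ∑ k ∈ Finset.range (n + 1), (-b / a) ^ k * w ^ ((-α + k * (β - α) : ℝ) : ℂ) =
      x⁻¹ * (((-b / a * u) ^ (n + 1) - 1) / (-b / a * u - 1)) := by
    rw [← geom_sum_eq hq, Finset.mul_sum]
    exact Finset.sum_congr rfl fun k _ => by rw [hpow, mul_pow]; ring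
  rw [hsum, show ((n : ℝ) + 1) = ((n + 1 : ℕ) : ℝ) by push_cast; ring, hpow,
    show -b / a * u - 1 = -(1 + b / a * u) by ring]
  field_simp
  ring

theorem eventually_differentiableAt_invAddCpowRemainder {a : ℂ} (b : ℂ) {α β : ℝ} (ha : a ≠ 0)
    (hαβ : α < β) (n : ℕ) :
    ∀ᶠ w in 𝓝[slitPlane] 0, DifferentiableAt ℂ (invAddCpowRemainder a b α β n) w := by
  have hD :=
    (tendsto_one_add_mul_cpow_nhds_zero (b / a) (sub_pos.2 hαβ)).eventually_ne one_ne_zero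
  filter_upwards [self_mem_nhdsWithin, nhdsWithin_le_nhds hD] with w hw hDw
  have hΦ : a * w ^ (α : ℂ) + b * w ^ (β : ℂ) ≠ 0 := by
    rw [mul_cpow_add_mul_cpow_eq a b α β ha (slitPlane_ne_zero hw)]
    exact mul_ne_zero (mul_ne_zero ha (by simp [cpow_eq_zero_iff, slitPlane_ne_zero hw])) hDw
  unfold invAddCpowRemainder
  fun_prop (disch := assumption)

theorem invAddCpowRemainder_isBigO {a : ℂ} (b : ℂ) {α β : ℝ} (ha : a ≠ 0) (hαβ : α < β)
    (n : ℕ) :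
    invAddCpowRemainder a b α β n =O[𝓝[slitPlane] 0]
      fun w => ‖w‖ ^ (-α + (n + 1) * (β - α)) := by
  have hD := tendsto_one_add_mul_cpow_nhds_zero (b / a) (sub_pos.2 hαβ)
  have hpow : (fun w : ℂ => w ^ ((-α + (n + 1) * (β - α) : ℝ) : ℂ)) =O[𝓝[slitPlane] 0]
      fun w => ‖w‖ ^ (-α + (n + 1) * (β - α)) :=
    .of_norm_eventuallyLE (.of_forall fun w => (norm_cpow_real _ _).le)
  have hclosed := ((hpow.const_mul_left (1 / a * (-b / a) ^ (n + 1))).mul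
    (((hD.inv₀ one_ne_zero).isBigO_one ℝ).mono nhdsWithin_le_nhds))
  refine hclosed.congr' ?_ (.of_forall fun w => mul_one _)
  filter_upwards [self_mem_nhdsWithin, nhdsWithin_le_nhds (hD.eventually_ne one_ne_zero)]
    with w hw hDw
  rw [invAddCpowRemainder_eq a b α β n ha (slitPlane_ne_zero hw) hDw]
  ring

theorem iteratedDeriv_remainder_bigO_zero_general (α β C₁ C₂ : ℝ)
    (hαβ : α < β) (hC₁ : 0 < C₁)
    (n : ℕ) (N : ℕ) :
    (fun z : ℂ =>
        iteratedDeriv N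
          (fun w : ℂ =>
            1 / ((C₁ : ℂ) * w ^ (α : ℂ) + (C₂ : ℂ) * w ^ (β : ℂ)) -
              (1 / (C₁ : ℂ)) * ∑ k ∈ Finset.range (n + 1),
                (-(C₂ : ℂ) / C₁) ^ k * w ^ ((-α + k * (β - α) : ℝ) : ℂ)) z)
      =O[nhdsWithin 0 {z : ℂ | 0 < z.re}]
      (fun z : ℂ => ‖z‖ ^ (-(N : ℝ) - α + (n + 1) * (β - α))) := by
  have ha : (C₁ : ℂ) ≠ 0 := ofReal_ne_zero.2 hC₁.ne'
  refine (iteratedDeriv_isBigO_rpow_of_isBigO_rpow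
    (eventually_differentiableAt_invAddCpowRemainder C₂ ha hαβ n)
    (invAddCpowRemainder_isBigO C₂ ha hαβ n) N).congr_right fun z => by ring_nf

/-- Asymptotic expansion at `0` (in the right half-plane) of the `N`-th derivative of the
remainder of `1/Φ`, `Φ(z) = C₁ z^α + C₂ z^β`, after removing the first `n+1` terms. -/
theorem iteratedDeriv_remainder_bigO_zero (α β C₁ C₂ : ℝ)
    (hα : 0 < α) (hαβ : α < β) (hβ : β ≤ 1) (hC₁ : 0 < C₁) (hC₂ : 0 < C₂)
    (n : ℕ) (N : ℕ) (hN1 : 1 ≤ N) (hN : 1 + α - (n + 1) * (β - α) < (N : ℝ)) :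
    (fun z : ℂ =>
        iteratedDeriv N
          (fun w : ℂ =>
            1 / ((C₁ : ℂ) * w ^ (α : ℂ) + (C₂ : ℂ) * w ^ (β : ℂ)) -
              (1 / (C₁ : ℂ)) * ∑ k ∈ Finset.range (n + 1),
                (-(C₂ : ℂ) / C₁) ^ k * w ^ ((-α + k * (β - α) : ℝ) : ℂ)) z)
      =O[nhdsWithin 0 {z : ℂ | 0 < z.re}]
      (fun z : ℂ => ‖z‖ ^ (-(N : ℝ) - α + (n + 1) * (β - α))) :=
  iteratedDeriv_remainder_bigO_zero_general α β C₁ C₂ hαβ hC₁ n N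
end

section
/- Let 0 < α < β ≤ 1 and C₁, C₂ > 0, and set Φ(z) = C₁ z^α + C₂ z^β. Then for every n ∈ ℕ ∪ {0}, d/dz ( 1/Φ(z) ) = -(1/C₂) Σ_{k=0}^n (-C₁/C₂)^k (β + k(β-α)) z^{-1-β-k(β-α)} + O(|z|^{-1-β-(n+1)(β-α)}) as z → ∞ within the open right half-plane {Re z > 0}. -/
open Complex Filter Asymptotics Bornology

/-!
Write `t = -(C₁/C₂) z^(α-β)`, so that `Φ(z) = C₂ z^β (1 - t)` and
`(1/Φ)'(z) = -(1/C₂) z^(-1-β) (β - α t) / (1 - t)²`. The sum in the expansion is `z^(-1-β)` times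
the `n`-th partial sum of the power series `(β - α t)/(1 - t)² = Σ (β + k(β-α)) tᵏ`, whose remainder
is `t^(n+1)` times a rational function of `t` that is continuous at `0`. Since `α < β`, `t → 0` as
`z → ∞`, and `|z^(-1-β) t^(n+1)| = |C₁/C₂|^(n+1) |z|^(-1-β-(n+1)(β-α))`.
-/

theorem sub_mul_sub_one_sub_sq_mul_sum {R : Type*} [CommRing R] (a b t : R) (n : ℕ) :
    b - a * t - (1 - t) ^ 2 * ∑ k ∈ Finset.range (n + 1), t ^ k * (b + k * (b - a)) =
      t ^ (n + 1) * (b + (n + 1) * (b - a) - (b + n * (b - a)) * t) := by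
  induction n with
  | zero => simp only [zero_add, Finset.sum_range_one]; push_cast; ring
  | succ n ih =>
    rw [Finset.sum_range_succ]
    push_cast at ih ⊢
    linear_combination ih

theorem deriv_one_div_mul_cpow_add_mul_cpow {a b c₁ c₂ z : ℂ} (hz : z ∈ slitPlane)
    (hc₂ : c₂ ≠ 0) (ht : 1 - -c₁ / c₂ * z ^ (a - b) ≠ 0) :
    deriv (fun w => 1 / (c₁ * w ^ a + c₂ * w ^ b)) z =
      -(1 / c₂) * z ^ (-1 - b) *
        ((b - a * (-c₁ / c₂ * z ^ (a - b))) / (1 - -c₁ / c₂ * z ^ (a - b)) ^ 2) := by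
  have hz₀ : z ≠ 0 := slitPlane_ne_zero hz
  have hΦ : HasDerivAt (fun w => c₁ * w ^ a + c₂ * w ^ b)
      (c₁ * (a * z ^ (a - 1)) + c₂ * (b * z ^ (b - 1))) z :=
    (((hasStrictDerivAt_cpow_const hz).hasDerivAt).const_mul _).add
      (((hasStrictDerivAt_cpow_const hz).hasDerivAt).const_mul _)
  have hza : z ^ a = z ^ b * z ^ (a - b) := by rw [← cpow_add _ _ hz₀]; ring_nf
  have hza₁ : z ^ (a - 1) = z ^ (-1 - b) * z ^ b * z ^ b * z ^ (a - b) := by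
    rw [← cpow_add _ _ hz₀, ← cpow_add _ _ hz₀, ← cpow_add _ _ hz₀]; ring_nf
  have hzb₁ : z ^ (b - 1) = z ^ (-1 - b) * z ^ b * z ^ b := by
    rw [← cpow_add _ _ hz₀, ← cpow_add _ _ hz₀]; ring_nf
  have hzb : z ^ b ≠ 0 := by simp [cpow_eq_zero_iff, hz₀]
  have hΦ₀ : c₁ * z ^ a + c₂ * z ^ b ≠ 0 := by
    rw [hza, show c₁ * (z ^ b * z ^ (a - b)) + c₂ * z ^ b
      = c₂ * z ^ b * (1 - -c₁ / c₂ * z ^ (a - b)) by field_simp; ring]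
    exact mul_ne_zero (mul_ne_zero hc₂ hzb) ht
  rw [((hasDerivAt_const z (1 : ℂ)).fun_div hΦ hΦ₀).deriv, hza₁, hzb₁, hza]
  rw [hza] at hΦ₀
  field_simp
  ring

theorem sum_mul_cpow_eq_cpow_mul_sum {a b c z : ℂ} (hz : z ≠ 0) (n : ℕ) :
    ∑ k ∈ Finset.range (n + 1), c ^ k * (b + k * (b - a)) * z ^ (-1 - b - k * (b - a)) =
      z ^ (-1 - b) * ∑ k ∈ Finset.range (n + 1), (c * z ^ (a - b)) ^ k * (b + k * (b - a)) := by
  rw [Finset.mul_sum]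
  refine Finset.sum_congr rfl fun k _ => ?_
  rw [show -1 - b - k * (b - a) = -1 - b + k * (a - b) by ring, cpow_add _ _ hz, cpow_nat_mul]
  ring

theorem deriv_one_div_mul_cpow_add_mul_cpow_add_sum_eq {a b c₁ c₂ z : ℂ} (hz : z ∈ slitPlane)
    (hc₂ : c₂ ≠ 0) (ht : 1 - -c₁ / c₂ * z ^ (a - b) ≠ 0) (n : ℕ) :
    deriv (fun w => 1 / (c₁ * w ^ a + c₂ * w ^ b)) z +
        1 / c₂ * ∑ k ∈ Finset.range (n + 1),
          (-c₁ / c₂) ^ k * (b + k * (b - a)) * z ^ (-1 - b - k * (b - a)) =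
      -(1 / c₂) * (z ^ (-1 - b) * (-c₁ / c₂ * z ^ (a - b)) ^ (n + 1)) *
        ((b + (n + 1) * (b - a) - (b + n * (b - a)) * (-c₁ / c₂ * z ^ (a - b))) /
          (1 - -c₁ / c₂ * z ^ (a - b)) ^ 2) := by
  rw [deriv_one_div_mul_cpow_add_mul_cpow hz hc₂ ht,
    sum_mul_cpow_eq_cpow_mul_sum (slitPlane_ne_zero hz)]
  have key := sub_mul_sub_one_sub_sq_mul_sum a b (-c₁ / c₂ * z ^ (a - b)) n
  set t := -c₁ / c₂ * z ^ (a - b)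
  clear_value t
  field_simp
  linear_combination (-z ^ (-1 - b)) * key

theorem tendsto_cpow_ofReal_cobounded_nhds_zero {s : ℝ} (hs : s < 0) :
    Tendsto (fun z : ℂ => z ^ (s : ℂ)) (cobounded ℂ) (nhds 0) := by
  rw [tendsto_zero_iff_norm_tendsto_zero]
  simp only [norm_cpow_real]
  exact (tendsto_rpow_neg_atTop (neg_pos.2 hs)).comp tendsto_norm_cobounded_atTop |>.congr
    fun x => by simp

theorem isBigO_cpow_mul_pow_cpow_cobounded (c : ℂ) (r s : ℝ) (m : ℕ) :
    (fun z : ℂ => z ^ (r : ℂ) * (c * z ^ (s : ℂ)) ^ m) =O[cobounded ℂ]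
      fun z => ‖z‖ ^ (r + m * s) := by
  refine IsBigO.of_bound (‖c‖ ^ m) ?_
  filter_upwards [eventually_ne_cobounded 0] with z hz
  have hz' : 0 < ‖z‖ := norm_pos_iff.2 hz
  rw [norm_mul, norm_pow, norm_mul, norm_cpow_real, norm_cpow_real,
    Real.norm_of_nonneg (by positivity), Real.rpow_add hz', mul_comm (m : ℝ),
    Real.rpow_mul hz'.le, Real.rpow_natCast]
  exact le_of_eq (by ring)

theorem deriv_inv_bigO_infty_general (α β C₁ C₂ : ℝ)
    (hαβ : α < β) (hC₂ : 0 < C₂) (n : ℕ) :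
    (fun z : ℂ =>
        deriv (fun w : ℂ => 1 / ((C₁ : ℂ) * w ^ (α : ℂ) + (C₂ : ℂ) * w ^ (β : ℂ))) z +
          (1 / (C₂ : ℂ)) * ∑ k ∈ Finset.range (n + 1),
            (-(C₁ : ℂ) / C₂) ^ k * ((β + k * (β - α) : ℝ) : ℂ) *
              z ^ ((-1 - β - k * (β - α) : ℝ) : ℂ))
      =O[cobounded ℂ ⊓ Filter.principal {z : ℂ | 0 < z.re}]
      (fun z : ℂ => ‖z‖ ^ (-1 - β - (n + 1) * (β - α))) := by
  set t : ℂ → ℂ := fun z => -C₁ / C₂ * z ^ ((α - β : ℝ) : ℂ)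
  set g : ℂ → ℂ := fun u => (β + (n + 1) * (β - α) - (β + n * (β - α)) * u) / (1 - u) ^ 2
  have ht : Tendsto t (cobounded ℂ) (nhds 0) := by
    simpa only [mul_zero] using
      (tendsto_cpow_ofReal_cobounded_nhds_zero (sub_neg.2 hαβ)).const_mul (-C₁ / C₂ : ℂ)
  have hg : ContinuousAt g 0 := ContinuousAt.div (by fun_prop) (by fun_prop) (by norm_num)
  have hbound :=
    (((isBigO_cpow_mul_pow_cpow_cobounded (-C₁ / C₂) (-1 - β) (α - β) (n + 1)).const_mul_left
      (-(1 / C₂ : ℂ))).mul ((hg.tendsto.comp ht).isBigO_one ℝ)).mono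
        (inf_le_left : cobounded ℂ ⊓ Filter.principal {z : ℂ | 0 < z.re} ≤ _)
  refine hbound.congr' ?_ (Eventually.of_forall fun z => ?_)
  · filter_upwards [(ht.eventually_ne zero_ne_one).filter_mono inf_le_left,
      mem_inf_of_right (mem_principal_self _)] with z ht₁ hre
    simp only [t, ofReal_sub] at ht₁
    have hexp := deriv_one_div_mul_cpow_add_mul_cpow_add_sum_eq (a := α) (b := β) (c₁ := C₁)
      (mem_slitPlane_iff.2 (.inl hre)) (ofReal_ne_zero.2 hC₂.ne') (sub_ne_zero.2 ht₁.symm) n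
    push_cast at hexp ⊢
    rw [hexp]
    simp only [g, t, Function.comp_apply, ofReal_sub]
  · push_cast
    ring_nf

/-- Asymptotic expansion at `∞` (in the right half-plane) of `d/dz (1/Φ)` for
`Φ(z) = C₁ z^α + C₂ z^β`:
`d/dz(1/Φ(z)) = -(1/C₂) Σ_{k=0}^n (-C₁/C₂)^k (β+k(β-α)) z^{-1-β-k(β-α)}
  + O(|z|^{-1-β-(n+1)(β-α)})`. -/
theorem deriv_inv_bigO_infty (α β C₁ C₂ : ℝ)
    (hα : 0 < α) (hαβ : α < β) (hβ : β ≤ 1) (hC₁ : 0 < C₁) (hC₂ : 0 < C₂) (n : ℕ) :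
    (fun z : ℂ =>
        deriv (fun w : ℂ => 1 / ((C₁ : ℂ) * w ^ (α : ℂ) + (C₂ : ℂ) * w ^ (β : ℂ))) z +
          (1 / (C₂ : ℂ)) * ∑ k ∈ Finset.range (n + 1),
            (-(C₁ : ℂ) / C₂) ^ k * ((β + k * (β - α) : ℝ) : ℂ) *
              z ^ ((-1 - β - k * (β - α) : ℝ) : ℂ))
      =O[cobounded ℂ ⊓ Filter.principal {z : ℂ | 0 < z.re}]
      (fun z : ℂ => ‖z‖ ^ (-1 - β - (n + 1) * (β - α))) :=
  deriv_inv_bigO_infty_general α β C₁ C₂ hαβ hC₂ n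
end

section
/- Let α ∈ (0,1), β ∈ (0,1], and set Φ(z) = z^β + log(1 + z^α) (principal branches). Then d/dz (1/Φ(z) - z^{-β}) = O(|z|^{-1-2β} log|z|) as z → ∞ within the open right half-plane {Re z > 0}. -/
open Complex Filter Asymptotics Bornology

/-!
Write `A = z^β`, `B = 1 + z^α`, `L = log B` and `Φ = A + L`. Since `Re z^α ≥ 0` on the right
half-plane, `1 ≤ ‖B‖ ≤ 2‖z‖^α`, so `L = O(log ‖z‖) = o(‖z‖^β)` and `Φ ≍ ‖z‖^β`. Differentiating
and using `Φ² - A² = L (Φ + A)`,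
`d/dz (1/Φ - z^{-β}) = (β L (Φ + A) - α (z^α / B) A) / (z A Φ²)`,
where the numerator is `O(‖z‖^β log ‖z‖)` because `‖z^α / B‖ ≤ 1`, and the denominator has size
`‖z‖^{1+3β}`.
-/

lemma re_cpow_ofReal_nonneg {z : ℂ} {a : ℝ} (hz : 0 ≤ z.re) (ha0 : 0 ≤ a) (ha1 : a ≤ 1) :
    0 ≤ (z ^ (a : ℂ)).re := by
  have harg : |arg z * a| ≤ Real.pi / 2 := by
    rw [abs_mul, abs_of_nonneg ha0]
    calc |arg z| * a ≤ |arg z| * 1 := by gcongr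
      _ ≤ Real.pi / 2 := by simpa using abs_arg_le_pi_div_two_iff.2 hz
  rw [cpow_ofReal_re]
  exact mul_nonneg (by positivity) (Real.cos_nonneg_of_mem_Icc (abs_le.1 harg))

lemma norm_le_norm_one_add {w : ℂ} (hw : 0 ≤ w.re) : ‖w‖ ≤ ‖1 + w‖ := by
  rw [← sq_le_sq₀ (norm_nonneg _) (norm_nonneg _), ← normSq_eq_norm_sq, ← normSq_eq_norm_sq,
    normSq_apply, normSq_apply]
  simp only [add_re, one_re, add_im, one_im, zero_add]
  nlinarith

lemma one_le_norm_one_add {w : ℂ} (hw : 0 ≤ w.re) : 1 ≤ ‖1 + w‖ :=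
  calc (1 : ℝ) ≤ (1 + w).re := by simpa using hw
    _ ≤ ‖1 + w‖ := re_le_norm _

lemma one_add_mem_slitPlane {w : ℂ} (hw : 0 ≤ w.re) : 1 + w ∈ slitPlane :=
  Or.inl (by simp only [add_re, one_re]; linarith)

lemma norm_log_le (w : ℂ) : ‖log w‖ ≤ |Real.log ‖w‖| + Real.pi :=
  calc ‖log w‖ ≤ |(log w).re| + |(log w).im| := norm_le_abs_re_add_abs_im _
    _ ≤ |Real.log ‖w‖| + Real.pi := by
      rw [log_re, log_im]
      gcongr
      exact abs_arg_le_pi w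

noncomputable def stablePlusGeometric (a b z : ℂ) : ℂ := z ^ b + log (1 + z ^ a)

lemma hasDerivAt_stablePlusGeometric {a b z : ℂ} (hz : z ∈ slitPlane)
    (hB : 1 + z ^ a ∈ slitPlane) :
    HasDerivAt (stablePlusGeometric a b) (b * z ^ b / z + a * z ^ a / (z * (1 + z ^ a))) z := by
  have hz0 : z ≠ 0 := slitPlane_ne_zero hz
  have hpow : ∀ c : ℂ, HasDerivAt (· ^ c) (c * z ^ c / z) z := fun c => by
    simpa [cpow_sub _ _ hz0, mul_div_assoc] using
      (hasStrictDerivAt_cpow_const (c := c) hz).hasDerivAt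
  refine ((hpow b).add (((hpow a).const_add 1).clog hB)).congr_deriv ?_
  field_simp [slitPlane_ne_zero hB]

lemma hasDerivAt_inv_stablePlusGeometric_sub_cpow_neg {a b z : ℂ} (hz : z ∈ slitPlane)
    (hB : 1 + z ^ a ∈ slitPlane) (hΦ : stablePlusGeometric a b z ≠ 0) :
    HasDerivAt (fun w => 1 / stablePlusGeometric a b w - w ^ (-b))
      ((b * log (1 + z ^ a) * (stablePlusGeometric a b z + z ^ b)
          - a * (z ^ a / (1 + z ^ a)) * z ^ b) /
        (z * z ^ b * stablePlusGeometric a b z ^ 2)) z := by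
  have hz0 : z ≠ 0 := slitPlane_ne_zero hz
  have hA0 : z ^ b ≠ 0 := by simp [hz0]
  have hneg : HasDerivAt (· ^ (-b)) (-b * z ^ (-b - 1)) z :=
    (hasStrictDerivAt_cpow_const hz).hasDerivAt
  simp only [one_div]
  refine (((hasDerivAt_stablePlusGeometric hz hB).inv hΦ).sub hneg).congr_deriv ?_
  rw [cpow_sub _ _ hz0, cpow_neg, cpow_one]
  unfold stablePlusGeometric at *
  field_simp [slitPlane_ne_zero hB]
  ring

lemma norm_div_one_add_le_one {w : ℂ} (hw : 0 ≤ w.re) : ‖w / (1 + w)‖ ≤ 1 := by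
  rw [norm_div]
  exact div_le_one_of_le₀ (norm_le_norm_one_add hw) (norm_nonneg _)

lemma norm_log_one_add_cpow_le {z : ℂ} {a : ℝ} (hz : 0 ≤ z.re) (ha0 : 0 ≤ a) (ha1 : a ≤ 1)
    (hz1 : 1 ≤ ‖z‖) : ‖log (1 + z ^ (a : ℂ))‖ ≤ a * Real.log ‖z‖ + (Real.log 2 + Real.pi) := by
  have hre := re_cpow_ofReal_nonneg hz ha0 ha1
  have hpow : 1 ≤ ‖z‖ ^ a := Real.one_le_rpow hz1 ha0
  have hB : ‖1 + z ^ (a : ℂ)‖ ≤ 2 * ‖z‖ ^ a :=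
    calc ‖1 + z ^ (a : ℂ)‖ ≤ 1 + ‖z‖ ^ a := by
          simpa [norm_cpow_real] using norm_add_le 1 (z ^ (a : ℂ))
      _ ≤ 2 * ‖z‖ ^ a := by linarith
  calc ‖log (1 + z ^ (a : ℂ))‖ ≤ Real.log ‖1 + z ^ (a : ℂ)‖ + Real.pi := by
        simpa [abs_of_nonneg (Real.log_nonneg (one_le_norm_one_add hre))] using
          norm_log_le (1 + z ^ (a : ℂ))
    _ ≤ Real.log (2 * ‖z‖ ^ a) + Real.pi := by
        gcongr
        exact zero_lt_one.trans_le (one_le_norm_one_add hre)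
    _ = a * Real.log ‖z‖ + (Real.log 2 + Real.pi) := by
        rw [Real.log_mul two_ne_zero (by positivity), Real.log_rpow (by linarith)]
        ring

section RightHalfPlaneAtInfinity

variable {l : Filter ℂ}

lemma isTheta_cpow_ofReal_norm_rpow (b : ℝ) :
    (fun z : ℂ => z ^ (b : ℂ)) =Θ[l] fun z => ‖z‖ ^ b := by
  simpa only [norm_cpow_real] using isTheta_norm_right.2 (isTheta_refl (fun z : ℂ => z ^ (b : ℂ)) l)

lemma isLittleO_const_log_norm (hl : Tendsto norm l atTop) (c : ℝ) :
    (fun _ => c) =o[l] fun z => Real.log ‖z‖ :=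
  isLittleO_const_left.2 (Or.inr (tendsto_norm_atTop_atTop.comp (Real.tendsto_log_atTop.comp hl)))

lemma isBigO_log_one_add_cpow (hl : Tendsto norm l atTop) (hre : ∀ᶠ z in l, 0 ≤ z.re) {a : ℝ}
    (ha0 : 0 ≤ a) (ha1 : a ≤ 1) :
    (fun z => log (1 + z ^ (a : ℂ))) =O[l] fun z => Real.log ‖z‖ := by
  have hbound : (fun z => a * Real.log ‖z‖ + (Real.log 2 + Real.pi)) =O[l] fun z => Real.log ‖z‖ :=
    ((isBigO_refl _ _).const_mul_left a).add (isLittleO_const_log_norm hl _).isBigO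
  refine IsBigO.trans (IsBigO.of_norm_eventuallyLE ?_) hbound
  filter_upwards [hre, hl.eventually_ge_atTop 1] with z hz hz1
  exact norm_log_one_add_cpow_le hz ha0 ha1 hz1

lemma isLittleO_log_one_add_cpow (hl : Tendsto norm l atTop) (hre : ∀ᶠ z in l, 0 ≤ z.re)
    {a b : ℝ} (ha0 : 0 ≤ a) (ha1 : a ≤ 1) (hb : 0 < b) :
    (fun z => log (1 + z ^ (a : ℂ))) =o[l] fun z => z ^ (b : ℂ) := by
  refine (isBigO_log_one_add_cpow hl hre ha0 ha1).trans_isLittleO ?_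
  rw [← isLittleO_norm_right]
  simp only [norm_cpow_real]
  exact (isLittleO_log_rpow_atTop hb).comp_tendsto hl

lemma isTheta_stablePlusGeometric (hl : Tendsto norm l atTop) (hre : ∀ᶠ z in l, 0 ≤ z.re)
    {a b : ℝ} (ha0 : 0 ≤ a) (ha1 : a ≤ 1) (hb : 0 < b) :
    stablePlusGeometric a b =Θ[l] fun z => ‖z‖ ^ b :=
  (IsEquivalent.refl.add_isLittleO (isLittleO_log_one_add_cpow hl hre ha0 ha1 hb)).isTheta.trans
    (isTheta_cpow_ofReal_norm_rpow b)

lemma eventually_stablePlusGeometric_ne_zero (hl : Tendsto norm l atTop)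
    (hre : ∀ᶠ z in l, 0 ≤ z.re) {a b : ℝ} (ha0 : 0 ≤ a) (ha1 : a ≤ 1) (hb : 0 < b) :
    ∀ᶠ z in l, stablePlusGeometric a b z ≠ 0 := by
  filter_upwards [(isTheta_stablePlusGeometric hl hre ha0 ha1 hb).symm.isBigO.eq_zero_imp,
    hl.eventually_gt_atTop 0] with z hz hz0 hΦ
  exact (Real.rpow_pos_of_pos hz0 b).ne' (hz hΦ)

lemma isBigO_deriv_inv_stablePlusGeometric_sub_cpow_neg (hl : Tendsto norm l atTop)
    (hpos : ∀ᶠ z in l, 0 < z.re) {a b : ℝ} (ha0 : 0 ≤ a) (ha1 : a ≤ 1) (hb : 0 < b) :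
    (fun z => deriv (fun w => 1 / stablePlusGeometric a b w - w ^ (-(b : ℂ))) z)
      =O[l] fun z => ‖z‖ ^ (-1 - 2 * b) * Real.log ‖z‖ := by
  have hre : ∀ᶠ z in l, 0 ≤ z.re := hpos.mono fun _ hz => hz.le
  have hpow := isTheta_cpow_ofReal_norm_rpow (l := l) b
  have hΦ := isTheta_stablePlusGeometric hl hre ha0 ha1 hb
  have hratio : (fun z => z ^ (a : ℂ) / (1 + z ^ (a : ℂ))) =O[l] fun _ => (1 : ℝ) :=
    IsBigO.of_bound 1 (by filter_upwards [hre] with z hz; simpa using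
      norm_div_one_add_le_one (re_cpow_ofReal_nonneg hz ha0 ha1))
  have hnum : (fun z => b * log (1 + z ^ (a : ℂ)) * (stablePlusGeometric a b z + z ^ (b : ℂ))
        - a * (z ^ (a : ℂ) / (1 + z ^ (a : ℂ))) * z ^ (b : ℂ))
      =O[l] fun z => Real.log ‖z‖ * ‖z‖ ^ b :=
    (((isBigO_log_one_add_cpow hl hre ha0 ha1).const_mul_left _).mul
      (hΦ.isBigO.add hpow.isBigO)).sub (((hratio.const_mul_left _).mul hpow.isBigO).trans
        ((isLittleO_const_log_norm hl 1).isBigO.mul (isBigO_refl _ _)))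
  have hden : (fun z => (z * z ^ (b : ℂ) * stablePlusGeometric a b z ^ 2)⁻¹)
      =O[l] fun z => (‖z‖ * ‖z‖ ^ b * (‖z‖ ^ b) ^ 2)⁻¹ := by
    refine ((isBigO_norm_left.2 (isBigO_refl _ _)).mul hpow.symm.isBigO
      |>.mul (hΦ.symm.isBigO.pow 2)).inv_rev ?_
    filter_upwards [hl.eventually_gt_atTop 0] with z hz h
    exact absurd h (by positivity)
  have hderiv : (fun z => deriv (fun w => 1 / stablePlusGeometric a b w - w ^ (-(b : ℂ))) z)
      =ᶠ[l] fun z => (b * log (1 + z ^ (a : ℂ)) * (stablePlusGeometric a b z + z ^ (b : ℂ))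
        - a * (z ^ (a : ℂ) / (1 + z ^ (a : ℂ))) * z ^ (b : ℂ)) *
          (z * z ^ (b : ℂ) * stablePlusGeometric a b z ^ 2)⁻¹ := by
    filter_upwards [hpos, eventually_stablePlusGeometric_ne_zero hl hre ha0 ha1 hb] with z hz hΦ
    have hB := one_add_mem_slitPlane (re_cpow_ofReal_nonneg hz.le ha0 ha1)
    exact (hasDerivAt_inv_stablePlusGeometric_sub_cpow_neg (Or.inl hz) hB hΦ).deriv
  refine (hnum.mul hden).congr' hderiv.symm ?_
  filter_upwards [hl.eventually_gt_atTop 0] with z hz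
  rw [show -1 - 2 * b = -(1 + b + b) by ring, Real.rpow_neg hz.le, Real.rpow_add hz,
    Real.rpow_add hz, Real.rpow_one]
  field_simp

end RightHalfPlaneAtInfinity

theorem deriv_inv_stable_plus_geometric_bigO_general (α β : ℝ)
    (hα0 : 0 < α) (hα1 : α < 1) (hβ0 : 0 < β) :
    (fun z : ℂ =>
        deriv (fun w : ℂ =>
          1 / (w ^ (β : ℂ) + Complex.log (1 + w ^ (α : ℂ))) - w ^ (-(β : ℂ))) z)
      =O[cobounded ℂ ⊓ Filter.principal {z : ℂ | 0 < z.re}]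
      (fun z : ℂ => ‖z‖ ^ (-1 - 2 * β) * Real.log ‖z‖) :=
  isBigO_deriv_inv_stablePlusGeometric_sub_cpow_neg
    (tendsto_norm_cobounded_atTop.mono_left inf_le_left)
    (mem_inf_of_right (mem_principal_self _)) hα0.le hα1.le hβ0

/-- For `Φ(z) = z^β + log(1+z^α)`, `d/dz (1/Φ(z) - z^{-β}) = O(|z|^{-1-2β} log|z|)`
as `z → ∞` in the open right half-plane. -/
theorem deriv_inv_stable_plus_geometric_bigO (α β : ℝ)
    (hα0 : 0 < α) (hα1 : α < 1) (hβ0 : 0 < β) (hβ1 : β ≤ 1) :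
    (fun z : ℂ =>
        deriv (fun w : ℂ =>
          1 / (w ^ (β : ℂ) + Complex.log (1 + w ^ (α : ℂ))) - w ^ (-(β : ℂ))) z)
      =O[cobounded ℂ ⊓ Filter.principal {z : ℂ | 0 < z.re}]
      (fun z : ℂ => ‖z‖ ^ (-1 - 2 * β) * Real.log ‖z‖) :=
  deriv_inv_stable_plus_geometric_bigO_general α β hα0 hα1 hβ0
end

section
/- Let 0 < α ≤ 1 and let b₋₁, b₀, b₁, … be the Laurent coefficients of 1/log(1+w) at w = 0. Fix n ∈ ℕ ∪ {0} and N ∈ ℕ with N > 1 + nα. Then (d/dz)^N ( 1/log(1+z^α) - Σ_{k=-1}^{n-1} b_k z^{kα} ) = O(|z|^{-N+nα}) as z → 0 within the open right half-plane {Re z > 0}. -/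
/-!
Writing `G w = 1 / log (1 + w) - ∑_{j ≤ n} b j * w ^ (j - 1)` for the tail of the Laurent series,
the function differentiated is `ζ ↦ G (ζ ^ α)`, and `‖G w‖ ≤ C ‖w‖ ^ n` near `0`, so its values
are `O(‖ζ‖ ^ (n α))` on a slit-plane neighbourhood of `0`. For `Re z > 0` the closed disc of radius
`‖z‖ / 2` about `z` avoids the cut `(-∞, 0]`, and Cauchy's estimate on that disc bounds the
`N`-th derivative at `z` by `N! · C (3‖z‖/2) ^ (n α) · (2 / ‖z‖) ^ N`.
-/

open Complex Filter Asymptotics Metric Topology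

namespace Complex

lemma norm_le_norm_sub_of_notMem_slitPlane {z ζ : ℂ} (hz : 0 ≤ z.re) (hζ : ζ ∉ slitPlane) :
    ‖z‖ ≤ ‖z - ζ‖ := by
  rw [mem_slitPlane_iff, not_or, not_lt, not_not] at hζ
  obtain ⟨hre, him⟩ := hζ
  rw [← sq_le_sq₀ (norm_nonneg _) (norm_nonneg _), Complex.sq_norm, Complex.sq_norm,
    normSq_apply, normSq_apply]
  simp only [sub_re, sub_im, him, sub_zero]
  nlinarith

lemma closedBall_half_norm_subset_slitPlane {z : ℂ} (hz : 0 < z.re) :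
    closedBall z (‖z‖ / 2) ⊆ slitPlane := by
  intro ζ hζ
  by_contra hζ'
  have hz0 : 0 < ‖z‖ := norm_pos_iff.2 fun h ↦ by simp [h] at hz
  have := norm_le_norm_sub_of_notMem_slitPlane hz.le hζ'
  rw [mem_closedBall, dist_comm, dist_eq_norm] at hζ
  linarith

lemma log_one_add_ne_zero {w : ℂ} (hw0 : w ≠ 0) (hw : ‖w‖ < 1) : log (1 + w) ≠ 0 := by
  intro h
  have := exp_log (slitPlane_ne_zero (mem_slitPlane_of_norm_lt_one hw))
  rw [h, exp_zero] at this
  exact hw0 (by linear_combination -this)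

lemma differentiableAt_one_div_log_one_add {w : ℂ} (hw0 : w ≠ 0) (hw : ‖w‖ < 1) :
    DifferentiableAt ℂ (fun w ↦ 1 / log (1 + w)) w :=
  (differentiableAt_const 1).div
    ((differentiableAt_id.const_add 1).clog (mem_slitPlane_of_norm_lt_one hw))
    (log_one_add_ne_zero hw0 hw)

lemma differentiableAt_one_div_log_one_add_sub_sum {w : ℂ} (hw0 : w ≠ 0) (hw : ‖w‖ < 1)
    (s : Finset ℕ) (b : ℕ → ℂ) :
    DifferentiableAt ℂ (fun w ↦ 1 / log (1 + w) - ∑ j ∈ s, b j * w ^ ((j : ℤ) - 1)) w :=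
  (differentiableAt_one_div_log_one_add hw0 hw).sub
    (.fun_sum fun _ _ ↦ (differentiableAt_zpow.2 (.inl hw0)).const_mul _)

lemma cpow_ofReal_sub_one_mul (w : ℂ) (j : ℕ) (α : ℝ) :
    w ^ ((((j : ℝ) - 1) * α : ℝ) : ℂ) = (w ^ (α : ℂ)) ^ ((j : ℤ) - 1) := by
  rw [← cpow_int_mul]
  push_cast
  rfl

lemma norm_cpow_ofReal_le {ζ : ℂ} {α c : ℝ} (hα : 0 < α) (hc : 0 ≤ c) (hζ : ‖ζ‖ ≤ c ^ α⁻¹) :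
    ‖ζ ^ (α : ℂ)‖ ≤ c := by
  rw [norm_cpow_real, ← Real.rpow_inv_rpow hc hα.ne']
  gcongr

lemma eventually_closedBall_half_norm_subset_slitPlane_inter {ρ : ℝ} (hρ : 0 < ρ) :
    ∀ᶠ z in 𝓝[{z : ℂ | 0 < z.re}] 0,
      z ≠ 0 ∧ closedBall z (‖z‖ / 2) ⊆ slitPlane ∩ closedBall 0 ρ := by
  filter_upwards [self_mem_nhdsWithin, nhdsWithin_le_nhds (closedBall_mem_nhds 0
      (by positivity : 0 < 2 / 3 * ρ))] with z (hz : 0 < z.re) hzρ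
  rw [mem_closedBall_zero_iff] at hzρ
  refine ⟨slitPlane_ne_zero (closedBall_half_norm_subset_slitPlane hz
    (mem_closedBall_self (by positivity))), Set.subset_inter
    (closedBall_half_norm_subset_slitPlane hz) (closedBall_subset_closedBall' ?_)⟩
  rw [dist_zero_right]
  linarith

end Complex

theorem isBigO_iteratedDeriv_of_norm_le_mul_rpow {f : ℂ → ℂ} {U : Set ℂ} {l : Filter ℂ}
    {C p : ℝ} (hp : 0 ≤ p) (hf : DifferentiableOn ℂ f U) (hfU : ∀ ζ ∈ U, ‖f ζ‖ ≤ C * ‖ζ‖ ^ p)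
    (hl : ∀ᶠ z in l, z ≠ 0 ∧ closedBall z (‖z‖ / 2) ⊆ U) (N : ℕ) :
    (fun z ↦ iteratedDeriv N f z) =O[l] fun z ↦ ‖z‖ ^ (-(N : ℝ) + p) := by
  refine IsBigO.of_bound (N.factorial * C * (3 / 2) ^ p * 2 ^ N) ?_
  filter_upwards [hl] with z ⟨hz0, hzU⟩
  have hz : 0 < ‖z‖ := norm_pos_iff.2 hz0
  have hr : 0 < ‖z‖ / 2 := by positivity
  have hC : 0 ≤ C := nonneg_of_mul_nonneg_left ((norm_nonneg _).trans
    (hfU z (hzU (mem_closedBall_self hr.le)))) (by positivity)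
  have hsphere : ∀ ζ ∈ sphere z (‖z‖ / 2), ‖f ζ‖ ≤ C * (3 / 2 * ‖z‖) ^ p := by
    intro ζ hζ
    have hζz : ‖ζ‖ ≤ 3 / 2 * ‖z‖ := by
      have := norm_le_norm_add_norm_sub' ζ z
      rw [mem_sphere_iff_norm] at hζ
      linarith
    calc ‖f ζ‖ ≤ C * ‖ζ‖ ^ p := hfU ζ (hzU (sphere_subset_closedBall hζ))
      _ ≤ C * (3 / 2 * ‖z‖) ^ p := by gcongr
  have cauchy := norm_iteratedDeriv_le_of_forall_mem_sphere_norm_le N hr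
    (hf.diffContOnCl_ball hzU) hsphere
  rw [Real.norm_of_nonneg (by positivity)]
  calc ‖iteratedDeriv N f z‖ ≤ N.factorial * (C * (3 / 2 * ‖z‖) ^ p) / (‖z‖ / 2) ^ N := cauchy
    _ = N.factorial * C * (3 / 2) ^ p * 2 ^ N * ‖z‖ ^ (-(N : ℝ) + p) := by
      rw [Real.mul_rpow (by norm_num) hz.le, Real.rpow_add hz, Real.rpow_neg hz.le,
        Real.rpow_natCast, div_pow]
      field_simp

lemma zpow_natCast_add_succ_sub_one {M : Type*} [DivInvMonoid M] (w : M) (m n : ℕ) :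
    w ^ (((m + (n + 1) : ℕ) : ℤ) - 1) = w ^ n * w ^ m := by
  rw [show ((m + (n + 1) : ℕ) : ℤ) - 1 = ((n + m : ℕ) : ℤ) by push_cast; ring, zpow_natCast,
    pow_add]

theorem exists_norm_sub_sum_le_of_hasSum_laurent {f : ℂ → ℂ} {b : ℕ → ℂ} {R ρ : ℝ}
    (hρ : 0 < ρ) (hρR : ρ < R)
    (hb : ∀ w : ℂ, w ≠ 0 → ‖w‖ < R → HasSum (fun j ↦ b j * w ^ ((j : ℤ) - 1)) (f w)) (n : ℕ) :
    ∃ C, ∀ w : ℂ, w ≠ 0 → ‖w‖ ≤ ρ →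
      ‖f w - ∑ j ∈ Finset.range (n + 1), b j * w ^ ((j : ℤ) - 1)‖ ≤ C * ‖w‖ ^ n := by
  have hbρ := hb ρ (ofReal_ne_zero.2 hρ.ne') (by rwa [norm_real, Real.norm_of_nonneg hρ.le])
  have htail : Summable fun m ↦ ‖b (m + (n + 1))‖ * ρ ^ m := by
    refine (((summable_nat_add_iff (n + 1)).2 (summable_norm_iff.2 hbρ.summable)).div_const
      (ρ ^ n)).congr fun m ↦ ?_
    rw [zpow_natCast_add_succ_sub_one, norm_mul, norm_mul, norm_pow, norm_pow, norm_real,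
      Real.norm_of_nonneg hρ.le]
    field_simp
  refine ⟨∑' m, ‖b (m + (n + 1))‖ * ρ ^ m, fun w hw0 hw ↦ ?_⟩
  rw [mul_comm _ (‖w‖ ^ n), ← tsum_mul_left]
  refine ((hasSum_nat_add_iff' (n + 1)).2 (hb w hw0 (hw.trans_lt hρR))).norm_le_of_bounded
    (htail.mul_left _).hasSum fun m ↦ ?_
  rw [zpow_natCast_add_succ_sub_one, norm_mul, norm_mul, norm_pow, norm_pow]
  calc _ = ‖w‖ ^ n * (‖b (m + (n + 1))‖ * ‖w‖ ^ m) := by ring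
    _ ≤ _ := by gcongr

theorem iteratedDeriv_inv_log_geometric_bigO_zero_general (α : ℝ) (hα0 : 0 < α)
    (b : ℕ → ℂ)
    (hb : ∀ w : ℂ, w ≠ 0 → ‖w‖ < 1 →
      HasSum (fun j : ℕ => b j * w ^ ((j : ℤ) - 1)) (1 / Complex.log (1 + w)))
    (n : ℕ) (N : ℕ) :
    (fun z : ℂ =>
        iteratedDeriv N
          (fun w : ℂ =>
            1 / Complex.log (1 + w ^ (α : ℂ)) -
              ∑ j ∈ Finset.range (n + 1), b j * w ^ ((((j : ℝ) - 1) * α : ℝ) : ℂ)) z)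
      =O[nhdsWithin 0 {z : ℂ | 0 < z.re}]
      (fun z : ℂ => ‖z‖ ^ (-(N : ℝ) + (n : ℝ) * α)) := by
  obtain ⟨C, hC⟩ := exists_norm_sub_sum_le_of_hasSum_laurent (by norm_num : (0 : ℝ) < 1 / 2)
    (by norm_num : (1 / 2 : ℝ) < 1) hb n
  have hρ : (0 : ℝ) < (1 / 2) ^ α⁻¹ := by positivity
  have hpow : ∀ ζ ∈ slitPlane ∩ closedBall 0 ((1 / 2) ^ α⁻¹),
      ζ ^ (α : ℂ) ≠ 0 ∧ ‖ζ ^ (α : ℂ)‖ ≤ 1 / 2 := fun ζ ⟨hζ, hζρ⟩ ↦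
    ⟨cpow_ne_zero_iff.2 (.inl (slitPlane_ne_zero hζ)),
      norm_cpow_ofReal_le hα0 (by norm_num) (mem_closedBall_zero_iff.1 hζρ)⟩
  simp_rw [cpow_ofReal_sub_one_mul]
  refine isBigO_iteratedDeriv_of_norm_le_mul_rpow (C := C) (by positivity) ?_ ?_
    (eventually_closedBall_half_norm_subset_slitPlane_inter hρ) N
  · intro ζ hζ
    obtain ⟨hw0, hw⟩ := hpow ζ hζ
    exact ((differentiableAt_one_div_log_one_add_sub_sum hw0 (hw.trans_lt (by norm_num)) _ b).comp
      ζ (differentiableAt_id.cpow_const hζ.1)).differentiableWithinAt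
  · intro ζ hζ
    obtain ⟨hw0, hw⟩ := hpow ζ hζ
    calc _ ≤ C * ‖ζ ^ (α : ℂ)‖ ^ n := hC _ hw0 hw
      _ = C * ‖ζ‖ ^ ((n : ℝ) * α) := by
        rw [norm_cpow_real, ← Real.rpow_natCast, ← Real.rpow_mul (norm_nonneg _), mul_comm α]

/-- Asymptotic expansion at `0` (right half-plane) of derivatives of
`1/log(1+z^α)` minus its Laurent-type expansion. Here `b j` denotes the Laurent
coefficient `b_{j-1}` of `1/log(1+w)` at `w = 0`, i.e.
`1/log(1+w) = Σ_{j≥0} b j · w^{j-1}` on `0 < |w| < 1`. -/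
theorem iteratedDeriv_inv_log_geometric_bigO_zero (α : ℝ) (hα0 : 0 < α) (hα1 : α ≤ 1)
    (b : ℕ → ℂ)
    (hb : ∀ w : ℂ, w ≠ 0 → ‖w‖ < 1 →
      HasSum (fun j : ℕ => b j * w ^ ((j : ℤ) - 1)) (1 / Complex.log (1 + w)))
    (n : ℕ) (N : ℕ) (hN : 1 + (n : ℝ) * α < (N : ℝ)) :
    (fun z : ℂ =>
        iteratedDeriv N
          (fun w : ℂ =>
            1 / Complex.log (1 + w ^ (α : ℂ)) -
              ∑ j ∈ Finset.range (n + 1), b j * w ^ ((((j : ℝ) - 1) * α : ℝ) : ℂ)) z)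
      =O[nhdsWithin 0 {z : ℂ | 0 < z.re}]
      (fun z : ℂ => ‖z‖ ^ (-(N : ℝ) + (n : ℝ) * α)) :=
  iteratedDeriv_inv_log_geometric_bigO_zero_general α hα0 b hb n N
end
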